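/- arXiv:2502.09114 — 7 statements merged into one kernel-verified Lean document; each statement's English description precedes it below -/
import Mathlib

section
/- For all n ≥ 1 and 1 ≤ k ≤ n, the break point a_{n,k} equals the probability that x_n ≤ k−1, where (x_n) is the inhomogeneous Markov chain started at x_0 = 0 with increments x_n = x_{n−1} + y_{n, x_{n−1}+1} and y_{n,k} are independent Bernoulli(p_{n,k}) random variables. -/
open MeasureTheory ProbabilityTheory Filter

namespace BreakPointAux

/-- Abstract chain driven by a configuration `v : ℕ × ℕ → ℕ`. -/
def X : ℕ → (ℕ × ℕ → ℕ) → ℕ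
  | 0, _ => 0
  | n+1, v => X n v + min (v (n+1, X n v + 1)) 1

lemma X_le (n : ℕ) (v : ℕ × ℕ → ℕ) : X n v ≤ n := by
  induction n with
  | zero => simp [X]
  | succ n ih => simp only [X]; omega

lemma X_agree (n : ℕ) {v w : ℕ × ℕ → ℕ}
    (h : ∀ i ∈ Finset.range (n+1) ×ˢ Finset.range (n+2), v i = w i) :
    X n v = X n w := by
  induction n with
  | zero => rfl
  | succ n ih =>
    have h' : ∀ i ∈ Finset.range (n+1) ×ˢ Finset.range (n+2), v i = w i := by
      intro i hi
      apply h
      simp only [Finset.mem_product, Finset.mem_range] at hi ⊢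
      omega
    have hx : X n v = X n w := ih h'
    simp only [X, hx]
    congr 2
    apply h
    simp only [Finset.mem_product, Finset.mem_range]
    have := X_le n w
    omega

lemma X_measurable (n : ℕ) : Measurable (X n) := by
  induction n with
  | zero => exact measurable_const
  | succ n ih =>
    have h1 : Measurable fun v : ℕ × ℕ → ℕ => v (n+1, X n v + 1) := by
      have h2 : Measurable fun p : (ℕ × ℕ → ℕ) × ℕ => p.1 (n+1, p.2 + 1) := by
        apply measurable_from_prod_countable_left
        intro j
        simpa using measurable_pi_apply ((n+1 : ℕ), j+1)
      exact h2.comp (measurable_id.prodMk ih)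
    exact ih.add (h1.min measurable_const)

end BreakPointAux

open BreakPointAux

/-- The break point `a n k` equals `P(x_n ≤ k-1)` where `(x_n)` is the inhomogeneous
Markov chain driven by independent Bernoulli(`p n k`) variables `y n k`. -/
theorem break_point_representation
    {Ω : Type*} [MeasurableSpace Ω] (μ : Measure Ω) [IsProbabilityMeasure μ]
    (p : ℕ → ℕ → ℝ) (hp : ∀ n k, 1 ≤ k → k ≤ n → p n k ∈ Set.Icc (0 : ℝ) 1)
    (a : ℕ → ℕ → ℝ)
    (ha0 : ∀ n, a n 0 = 0) (ha1 : ∀ n, a n (n + 1) = 1)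
    (harec : ∀ n k, 1 ≤ n → 1 ≤ k → k ≤ n →
      a n k = p n k * a (n - 1) (k - 1) + (1 - p n k) * a (n - 1) k)
    (y : ℕ → ℕ → Ω → ℕ)
    (hy01 : ∀ n k ω, y n k ω ≤ 1)
    (hymeas : ∀ n k, Measurable (y n k))
    (hindep : iIndepFun (m := fun _ : ℕ × ℕ => (inferInstance : MeasurableSpace ℕ))
      (fun nk => y nk.1 nk.2) μ)
    (hbern : ∀ n k, 1 ≤ k → k ≤ n → μ {ω | y n k ω = 1} = ENNReal.ofReal (p n k))
    (x : ℕ → Ω → ℕ)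
    (hx0 : ∀ ω, x 0 ω = 0)
    (hxrec : ∀ n, 1 ≤ n → ∀ ω, x n ω = x (n - 1) ω + y n (x (n - 1) ω + 1) ω) :
    ∀ n k, 1 ≤ n → 1 ≤ k → k ≤ n →
      a n k = (μ {ω | x n ω ≤ k - 1}).toReal := by
  -- the joint configuration map
  set J : Ω → (ℕ × ℕ → ℕ) := fun ω i => y i.1 i.2 ω with hJ
  have hJmeas : Measurable J := measurable_pi_lambda _ fun i => hymeas i.1 i.2
  -- representation of x via X
  have hxX : ∀ n ω, x n ω = X n (J ω) := by
    intro n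
    induction n with
    | zero => intro ω; rw [hx0 ω]; rfl
    | succ m ih =>
      intro ω
      have hr := hxrec (m+1) (by omega) ω
      simp only [Nat.add_sub_cancel] at hr
      have hmin : min (y (m+1) (X m (J ω) + 1) ω) 1 = y (m+1) (X m (J ω) + 1) ω :=
        min_eq_left (hy01 _ _ _)
      rw [hr, ih ω]
      show X m (J ω) + y (m+1) (X m (J ω) + 1) ω = X m (J ω) + min (J ω (m+1, X m (J ω) + 1)) 1
      have he : J ω (m+1, X m (J ω) + 1) = y (m+1) (X m (J ω) + 1) ω := rfl
      rw [he, min_eq_left (hy01 _ _ _)]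
  have hxmeas : ∀ n, Measurable (x n) := by
    intro n
    have : x n = fun ω => X n (J ω) := funext (hxX n)
    rw [this]
    exact (X_measurable n).comp hJmeas
  have hxle : ∀ n ω, x n ω ≤ n := fun n ω => (hxX n ω) ▸ X_le n (J ω)
  -- independence of x n from y (n+1) k
  have hind : ∀ n k, IndepFun (x n) (y (n+1) k) μ := by
    intro n k
    set S : Finset (ℕ × ℕ) := Finset.range (n+1) ×ˢ Finset.range (n+2) with hS
    have hST : Disjoint S ({((n+1 : ℕ), k)} : Finset (ℕ × ℕ)) := by
      rw [Finset.disjoint_singleton_right, hS]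
      simp [Finset.mem_product]
    have h := hindep.indepFun_finset S {((n+1 : ℕ), k)} hST (fun i => hymeas i.1 i.2)
    have hφ : Measurable (fun u : S → ℕ =>
        X n (fun i => if hi : i ∈ S then u ⟨i, hi⟩ else 0)) := by
      apply (X_measurable n).comp
      apply measurable_pi_lambda
      intro i
      by_cases hi : i ∈ S
      · simpa only [dif_pos hi] using measurable_pi_apply (⟨i, hi⟩ : S)
      · simp only [dif_neg hi]; exact measurable_const
    have hψ : Measurable (fun u : ({((n+1 : ℕ), k)} : Finset (ℕ × ℕ)) → ℕ =>
        u ⟨((n+1 : ℕ), k), Finset.mem_singleton_self _⟩) := measurable_pi_apply _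
    have h2 := h.comp hφ hψ
    have e1 : (fun u : S → ℕ => X n (fun i => if hi : i ∈ S then u ⟨i, hi⟩ else 0)) ∘
        (fun ω (i : S) => y (i : ℕ × ℕ).1 (i : ℕ × ℕ).2 ω) = x n := by
      funext ω
      show X n (fun i => if hi : i ∈ S then y i.1 i.2 ω else 0) = x n ω
      rw [hxX n ω]
      apply X_agree
      intro i hi
      rw [dif_pos hi]
    have e2 : (fun u : ({((n+1 : ℕ), k)} : Finset (ℕ × ℕ)) → ℕ =>
        u ⟨((n+1 : ℕ), k), Finset.mem_singleton_self _⟩) ∘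
        (fun ω (i : ({((n+1 : ℕ), k)} : Finset (ℕ × ℕ))) =>
          y (i : ℕ × ℕ).1 (i : ℕ × ℕ).2 ω) = y (n+1) k := by
      funext ω; rfl
    rw [e1, e2] at h2
    exact h2
  -- probability of y = 0
  have hy0 : ∀ n k, 1 ≤ k → k ≤ n →
      μ {ω | y n k ω = 0} = ENNReal.ofReal (1 - p n k) := by
    intro n k h1 h2
    have hset : {ω | y n k ω = 0} = {ω | y n k ω = 1}ᶜ := by
      ext ω
      simp only [Set.mem_setOf_eq, Set.mem_compl_iff]
      have := hy01 n k ω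
      omega
    have hmeas1 : MeasurableSet {ω | y n k ω = 1} :=
      hymeas n k (measurableSet_singleton 1)
    rw [hset, measure_compl hmeas1 (measure_ne_top μ _), measure_univ, hbern n k h1 h2]
    have hps := hp n k h1 h2
    rw [ENNReal.ofReal_sub 1 hps.1, ENNReal.ofReal_one]
  -- main strengthened induction
  have key : ∀ n, ∀ k ≤ n, a n (k+1) = (μ {ω | x n ω ≤ k}).toReal := by
    intro n
    induction n with
    | zero =>
      intro k hk
      interval_cases k
      have huniv : {ω | x 0 ω ≤ 0} = Set.univ := by
        ext ω; simp [hx0 ω]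
      rw [huniv, measure_univ, ENNReal.toReal_one]
      exact ha1 0
    | succ m ih =>
      intro k hk
      rcases Nat.lt_or_ge k (m+1) with hk' | hk'
      · -- k ≤ m, recursive step
        have hkm : k ≤ m := by omega
        have hrec := harec (m+1) (k+1) (by omega) (by omega) (by omega)
        simp only [Nat.add_sub_cancel] at hrec
        set s := p (m+1) (k+1) with hsdef
        have hps := hp (m+1) (k+1) (by omega) (by omega)
        -- set decomposition
        have hset : {ω | x (m+1) ω ≤ k} =
            {ω | x m ω < k} ∪ ({ω | x m ω = k} ∩ {ω | y (m+1) (k+1) ω = 0}) := by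
          ext ω
          have hr := hxrec (m+1) (by omega) ω
          simp only [Nat.add_sub_cancel] at hr
          have hy := hy01 (m+1) (x m ω + 1) ω
          simp only [Set.mem_setOf_eq, Set.mem_union, Set.mem_inter_iff]
          constructor
          · intro h
            rw [hr] at h
            rcases Nat.lt_or_ge (x m ω) k with h' | h'
            · exact Or.inl h'
            · have hxe : x m ω = k := by omega
              right
              refine ⟨hxe, ?_⟩
              rw [hxe] at h
              omega
          · intro h
            rw [hr]
            rcases h with h | ⟨h1, h2⟩
            · omega
            · rw [h1]
              omega
        have hm1 : MeasurableSet {ω | x m ω < k} := hxmeas m measurableSet_Iio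
        have hm2 : MeasurableSet {ω | x m ω = k} := hxmeas m (measurableSet_singleton k)
        have hm3 : MeasurableSet {ω | y (m+1) (k+1) ω = 0} :=
          hymeas (m+1) (k+1) (measurableSet_singleton 0)
        have hdisj : Disjoint {ω | x m ω < k}
            ({ω | x m ω = k} ∩ {ω | y (m+1) (k+1) ω = 0}) := by
          rw [Set.disjoint_left]
          rintro ω hω ⟨h1, _⟩
          simp only [Set.mem_setOf_eq] at hω h1
          omega
        -- independence
        have hmul : μ ({ω | x m ω = k} ∩ {ω | y (m+1) (k+1) ω = 0}) =
            μ {ω | x m ω = k} * μ {ω | y (m+1) (k+1) ω = 0} := by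
          have := (hind m (k+1)).measure_inter_preimage_eq_mul {k} {0}
            (measurableSet_singleton k) (measurableSet_singleton 0)
          exact this
        have hsplit : μ {ω | x m ω ≤ k} = μ {ω | x m ω < k} + μ {ω | x m ω = k} := by
          have : {ω | x m ω ≤ k} = {ω | x m ω < k} ∪ {ω | x m ω = k} := by
            ext ω; simp only [Set.mem_setOf_eq, Set.mem_union]; omega
          rw [this, measure_union _ hm2]
          rw [Set.disjoint_left]
          intro ω hω h1
          simp only [Set.mem_setOf_eq] at hω h1
          omega
        -- combine measures
        have hmain : μ {ω | x (m+1) ω ≤ k} =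
            μ {ω | x m ω < k} + μ {ω | x m ω = k} * ENNReal.ofReal (1 - s) := by
          rw [hset, measure_union hdisj (hm2.inter hm3), hmul,
            hy0 (m+1) (k+1) (by omega) (by omega)]
        -- real numbers
        set q1 := (μ {ω | x m ω < k}).toReal with hq1
        set q2 := (μ {ω | x m ω = k}).toReal with hq2
        set q3 := (μ {ω | x m ω ≤ k}).toReal with hq3
        have hq3eq : q3 = q1 + q2 := by
          rw [hq3, hsplit, ENNReal.toReal_add (measure_ne_top μ _) (measure_ne_top μ _)]
        have htoreal : (μ {ω | x (m+1) ω ≤ k}).toReal = q1 + q2 * (1 - s) := by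
          rw [hmain, ENNReal.toReal_add (measure_ne_top μ _)
            (ENNReal.mul_ne_top (measure_ne_top μ _) ENNReal.ofReal_ne_top),
            ENNReal.toReal_mul, ENNReal.toReal_ofReal (by linarith [hps.2])]
        rw [htoreal, hrec]
        -- identify a m k with q1 and a m (k+1) with q3
        have hak1 : a m (k+1) = q3 := ih k hkm
        have hak : a m k = q1 := by
          rcases Nat.eq_zero_or_pos k with rfl | hkpos
          · rw [ha0 m, hq1]
            have : {ω | x m ω < 0} = (∅ : Set Ω) := by ext ω; simp
            rw [this]
            simp
          · obtain ⟨j, rfl⟩ : ∃ j, k = j + 1 := ⟨k - 1, by omega⟩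
            have := ih j (by omega)
            rw [this, hq1]
            congr 2
            ext ω
            simp only [Set.mem_setOf_eq]
            omega
        rw [hak, hak1, hq3eq]
        ring
      · -- k = m + 1, boundary
        have hkeq : k = m + 1 := by omega
        subst hkeq
        have huniv : {ω | x (m+1) ω ≤ m + 1} = Set.univ := by
          ext ω
          simp only [Set.mem_setOf_eq, Set.mem_univ, iff_true]
          exact hxle (m+1) ω
        rw [huniv, measure_univ, ENNReal.toReal_one]
        exact ha1 (m+1)
  intro n k hn hk1 hkn
  obtain ⟨j, rfl⟩ : ∃ j, k = j + 1 := ⟨k - 1, by omega⟩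
  have := key n j (by omega)
  simpa using this
end

section
/- If there is p̄ ∈ [0,1] such that x_n/n → p̄ in probability, then the empirical distributions g_n = (1/n)∑_{k=1}^n δ_{a_{n,k}} converge weakly on [0,1] to p̄·δ_0 + (1−p̄)·δ_1. -/
open MeasureTheory ProbabilityTheory Filter Topology

/-- Deterministic recursion computing `x n` from the Bernoulli values. -/
def brF : ℕ → ((ℕ × ℕ) → ℕ) → ℕ
  | 0, _ => 0
  | n + 1, g => brF n g + min (g (n + 1, brF n g + 1)) 1

lemma brF_le (n : ℕ) (g : (ℕ × ℕ) → ℕ) : brF n g ≤ n := by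
  induction n with
  | zero => simp [brF]
  | succ n ih =>
    have : min (g (n + 1, brF n g + 1)) 1 ≤ 1 := min_le_right _ _
    simp only [brF]; omega

lemma brF_congr (n : ℕ) {g g' : (ℕ × ℕ) → ℕ}
    (h : ∀ q : ℕ × ℕ, q.1 ≤ n → q.2 ≤ n → g q = g' q) : brF n g = brF n g' := by
  induction n with
  | zero => rfl
  | succ n ih =>
    have hih : brF n g = brF n g' :=
      ih fun q h1 h2 => h q (h1.trans n.le_succ) (h2.trans n.le_succ)
    have hb := brF_le n g'
    simp only [brF, hih]
    rw [h (n + 1, brF n g' + 1) le_rfl (by omega)]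

lemma brF_measurable (n : ℕ) : Measurable (brF n) := by
  induction n with
  | zero => exact measurable_const
  | succ n ih =>
    have heval : Measurable fun g : (ℕ × ℕ) → ℕ => g (n + 1, brF n g + 1) := by
      apply measurable_to_countable'
      intro c
      have hset : (fun g : (ℕ × ℕ) → ℕ => g (n + 1, brF n g + 1)) ⁻¹' {c}
          = ⋃ m : ℕ, (brF n ⁻¹' {m} ∩ (fun g : (ℕ × ℕ) → ℕ => g (n + 1, m + 1)) ⁻¹' {c}) := by
        ext g
        simp only [Set.mem_preimage, Set.mem_singleton_iff, Set.mem_iUnion, Set.mem_inter_iff]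
        constructor
        · intro hc; exact ⟨brF n g, rfl, hc⟩
        · rintro ⟨m, hm, hc⟩; rw [hm]; exact hc
      rw [hset]
      exact MeasurableSet.iUnion fun m =>
        (ih (measurableSet_singleton m)).inter
          ((measurable_pi_apply _) (measurableSet_singleton c))
    have : Measurable fun g : (ℕ × ℕ) → ℕ => brF n g + min (g (n + 1, brF n g + 1)) 1 :=
      ih.add ((measurable_of_countable (fun m => min m 1)).comp heval)
    exact this

set_option maxHeartbeats 2000000 in
/-- If `x_n / n → p̄` in probability, then the empirical distribution of break points
converges weakly on `[0,1]` to `p̄·δ₀ + (1-p̄)·δ₁`. -/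
theorem empirical_weak_convergence_of_LLN
    {Ω : Type*} [MeasurableSpace Ω] (μ : Measure Ω) [IsProbabilityMeasure μ]
    (p : ℕ → ℕ → ℝ) (hp : ∀ n k, 1 ≤ k → k ≤ n → p n k ∈ Set.Icc (0 : ℝ) 1)
    (a : ℕ → ℕ → ℝ)
    (ha0 : ∀ n, a n 0 = 0) (ha1 : ∀ n, a n (n + 1) = 1)
    (harec : ∀ n k, 1 ≤ n → 1 ≤ k → k ≤ n →
      a n k = p n k * a (n - 1) (k - 1) + (1 - p n k) * a (n - 1) k)
    (y : ℕ → ℕ → Ω → ℕ)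
    (hy01 : ∀ n k ω, y n k ω ≤ 1)
    (hymeas : ∀ n k, Measurable (y n k))
    (hindep : iIndepFun
      (fun nk : ℕ × ℕ => y nk.1 nk.2) μ)
    (hbern : ∀ n k, 1 ≤ k → k ≤ n → μ {ω | y n k ω = 1} = ENNReal.ofReal (p n k))
    (x : ℕ → Ω → ℕ)
    (hx0 : ∀ ω, x 0 ω = 0)
    (hxrec : ∀ n, 1 ≤ n → ∀ ω, x n ω = x (n - 1) ω + y n (x (n - 1) ω + 1) ω)
    (pbar : ℝ) (hpbar : pbar ∈ Set.Icc (0 : ℝ) 1)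
    (hLLN : ∀ ε > (0 : ℝ), Tendsto
      (fun n => (μ {ω | ε ≤ |(x n ω : ℝ) / n - pbar|}).toReal) atTop (𝓝 0)) :
    ∀ f : BoundedContinuousFunction ℝ ℝ,
      Tendsto (fun n : ℕ => (1 / (n : ℝ)) * ∑ k ∈ Finset.Icc 1 n, f (a n k)) atTop
        (𝓝 (pbar * f 0 + (1 - pbar) * f 1)) := by
  classical
  intro f
  -- basic facts about x
  have hxle : ∀ n ω, x n ω ≤ n := by
    intro n
    induction n with
    | zero => intro ω; simp [hx0]
    | succ n ih =>
      intro ω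
      rw [hxrec (n + 1) (by omega) ω]
      simp only [Nat.add_sub_cancel]
      have h1 := hy01 (n + 1) (x n ω + 1) ω
      have h2 := ih ω
      omega
  have hxF : ∀ n ω, x n ω = brF n (fun q => y q.1 q.2 ω) := by
    intro n
    induction n with
    | zero => intro ω; simp [hx0, brF]
    | succ n ih =>
      intro ω
      rw [hxrec (n + 1) (by omega) ω]
      simp only [Nat.add_sub_cancel]
      rw [ih ω]
      show _ = brF (n + 1) (fun q => y q.1 q.2 ω)
      simp only [brF]
      congr 1
      exact (min_eq_left (hy01 _ _ _)).symm
  have hxmeas : ∀ n, Measurable (x n) := by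
    intro n
    have hx : x n = fun ω => brF n (fun q => y q.1 q.2 ω) := funext fun ω => hxF n ω
    rw [hx]
    exact (brF_measurable n).comp (measurable_pi_lambda _ fun q => hymeas q.1 q.2)
  -- independence of x n and y (n+1) k
  have hind : ∀ n k j : ℕ, μ ({ω | x n ω = j} ∩ {ω | y (n + 1) k ω = 0})
      = μ {ω | x n ω = j} * μ {ω | y (n + 1) k ω = 0} := by
    intro n k j
    set S : Finset (ℕ × ℕ) := Finset.Iic n ×ˢ Finset.Iic n with hS
    set T : Finset (ℕ × ℕ) := {(n + 1, k)} with hT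
    have hdisj : Disjoint S T := by
      rw [Finset.disjoint_singleton_right]
      simp [hS, Finset.mem_product]
    have hbase := hindep.indepFun_finset S T hdisj (fun q => hymeas q.1 q.2)
    set φ : (S → ℕ) → ℕ := fun g => brF n (fun q => if h : q ∈ S then g ⟨q, h⟩ else 0) with hφ
    have hφm : Measurable φ := by
      apply (brF_measurable n).comp
      apply measurable_pi_lambda
      intro q
      by_cases h : q ∈ S
      · simpa [h] using measurable_pi_apply (⟨q, h⟩ : S)
      · simpa [h] using measurable_const
    set ψ : (T → ℕ) → ℕ := fun g => g ⟨(n + 1, k), Finset.mem_singleton_self _⟩ with hψ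
    have hψm : Measurable ψ := measurable_pi_apply _
    have hcomp := hbase.comp hφm hψm
    have hx_eq : (φ ∘ fun ω (i : S) => y (i : ℕ × ℕ).1 (i : ℕ × ℕ).2 ω) = x n := by
      funext ω
      simp only [Function.comp_apply, hφ]
      rw [hxF n ω]
      apply brF_congr
      intro q h1 h2
      have hq : q ∈ S := by
        rw [hS, Finset.mem_product]
        exact ⟨Finset.mem_Iic.mpr h1, Finset.mem_Iic.mpr h2⟩
      simp [hq]
    have hy_eq : (ψ ∘ fun ω (i : T) => y (i : ℕ × ℕ).1 (i : ℕ × ℕ).2 ω) = y (n + 1) k := by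
      funext ω; rfl
    rw [show (fun ω (i : S) => (fun nk : ℕ × ℕ => y nk.1 nk.2) (i : ℕ × ℕ) ω)
        = (fun ω (i : S) => y (i : ℕ × ℕ).1 (i : ℕ × ℕ).2 ω) from rfl] at hcomp
    rw [hx_eq, hy_eq] at hcomp
    exact hcomp.measure_inter_preimage_eq_mul {j} {0}
      (measurableSet_singleton _) (measurableSet_singleton _)
  -- Bernoulli zero probability
  have hy0meas : ∀ n k, MeasurableSet {ω | y n k ω = 0} :=
    fun n k => hymeas n k (measurableSet_singleton 0)
  have hy0 : ∀ n k, 1 ≤ k → k ≤ n →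
      μ {ω | y n k ω = 0} = 1 - ENNReal.ofReal (p n k) := by
    intro n k h1 h2
    have hc : {ω | y n k ω = 0} = {ω | y n k ω = 1}ᶜ := by
      ext ω
      simp only [Set.mem_setOf_eq, Set.mem_compl_iff]
      have := hy01 n k ω
      omega
    rw [hc, prob_compl_eq_one_sub (μ := μ) (s := {ω | y n k ω = 1}) (hymeas n k (measurableSet_singleton 1)), hbern n k h1 h2]
  -- the key identity: a n k = P(x n < k)
  have ha_eq : ∀ n, ∀ k ≤ n + 1, a n k = (μ {ω | x n ω < k}).toReal := by
    intro n
    induction n with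
    | zero =>
      intro k hk
      interval_cases k
      · have he : {ω | x 0 ω < 0} = ∅ := by ext ω; simp
        rw [ha0 0, he]
        simp
      · have he : {ω | x 0 ω < 1} = Set.univ := by
          ext ω; simp [hx0 ω]
        rw [show a 0 1 = 1 from ha1 0, he]
        simp
    | succ n ih =>
      intro k hk
      match k with
      | 0 =>
        have he : {ω | x (n + 1) ω < 0} = ∅ := by ext ω; simp
        rw [ha0, he]; simp
      | Nat.succ j =>
        by_cases hjn : j ≤ n
        · -- the main recursion case : 1 ≤ j+1 ≤ n+1
          have hrec := harec (n + 1) (j + 1) (by omega) (by omega) (by omega)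
          simp only [Nat.add_sub_cancel] at hrec
          have hAj := ih j (by omega)
          have hAj1 := ih (j + 1) (by omega)
          have hsplit : {ω | x (n + 1) ω < j + 1}
              = {ω | x n ω < j} ∪ ({ω | x n ω = j} ∩ {ω | y (n + 1) (j + 1) ω = 0}) := by
            ext ω
            have hxr := hxrec (n + 1) (by omega) ω
            simp only [Nat.add_sub_cancel] at hxr
            have hyb := hy01 (n + 1) (x n ω + 1) ω
            simp only [Set.mem_setOf_eq, Set.mem_union, Set.mem_inter_iff, hxr]
            constructor
            · intro h
              rcases lt_trichotomy (x n ω) j with h1 | h1 | h1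
              · exact Or.inl h1
              · right
                refine ⟨h1, ?_⟩
                rw [h1] at h
                have : y (n + 1) (j + 1) ω = 0 := by omega
                exact this
              · omega
            · rintro (h | ⟨h1, h2⟩)
              · omega
              · rw [h1] at hyb ⊢
                omega
          have hm1 : MeasurableSet {ω | x n ω < j} := hxmeas n measurableSet_Iio
          have hm2 : MeasurableSet ({ω | x n ω = j} ∩ {ω | y (n + 1) (j + 1) ω = 0}) :=
            (hxmeas n (measurableSet_singleton j)).inter (hy0meas _ _)
          have hdisjs : Disjoint {ω | x n ω < j}
              ({ω | x n ω = j} ∩ {ω | y (n + 1) (j + 1) ω = 0}) := by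
            rw [Set.disjoint_left]
            rintro ω h1 ⟨h2, _⟩
            simp only [Set.mem_setOf_eq] at h1 h2
            omega
          have hmeasure : μ {ω | x (n + 1) ω < j + 1}
              = μ {ω | x n ω < j} + μ {ω | x n ω = j} * μ {ω | y (n + 1) (j + 1) ω = 0} := by
            rw [hsplit, measure_union hdisjs hm2, hind n (j + 1) j]
          have hsing : μ {ω | x n ω = j} + μ {ω | x n ω < j} = μ {ω | x n ω < j + 1} := by
            rw [← measure_union (by
                rw [Set.disjoint_left]
                intro ω h1 h2
                simp only [Set.mem_setOf_eq] at h1 h2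
                omega) hm1]
            congr 1
            ext ω
            simp only [Set.mem_setOf_eq, Set.mem_union]
            omega
          have hq := hp (n + 1) (j + 1) (by omega) (by omega)
          have hy0' : (μ {ω | y (n + 1) (j + 1) ω = 0}).toReal = 1 - p (n + 1) (j + 1) := by
            rw [hy0 (n + 1) (j + 1) (by omega) (by omega),
              ENNReal.toReal_sub_of_le (ENNReal.ofReal_le_one.mpr hq.2) ENNReal.one_ne_top,
              ENNReal.toReal_one, ENNReal.toReal_ofReal hq.1]
          have htB : (μ {ω | x n ω = j}).toReal + (μ {ω | x n ω < j}).toReal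
              = (μ {ω | x n ω < j + 1}).toReal := by
            rw [← ENNReal.toReal_add (measure_ne_top μ _) (measure_ne_top μ _), hsing]
          have hfinal : (μ {ω | x (n + 1) ω < j + 1}).toReal
              = (μ {ω | x n ω < j}).toReal
                + (μ {ω | x n ω = j}).toReal * (1 - p (n + 1) (j + 1)) := by
            rw [hmeasure, ENNReal.toReal_add (measure_ne_top μ _)
              (ENNReal.mul_ne_top (measure_ne_top μ _) (measure_ne_top μ _)),
              ENNReal.toReal_mul, hy0']
          rw [hrec, hAj, hAj1, hfinal, ← htB]
          ring
        · -- k = n + 2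
          have hj : j = n + 1 := by omega
          subst hj
          have he : {ω | x (n + 1) ω < n + 1 + 1} = Set.univ := by
            ext ω
            simp only [Set.mem_setOf_eq, Set.mem_univ, iff_true]
            have := hxle (n + 1) ω
            omega
          rw [show a (n + 1) (n + 1 + 1) = 1 from ha1 (n + 1), he]
          simp
  -- bounds on a
  have htoReal_le_one : ∀ s : Set Ω, (μ s).toReal ≤ 1 := by
    intro s
    simpa using ENNReal.toReal_mono ENNReal.one_ne_top (prob_le_one (μ := μ) (s := s))
  have ha_mem : ∀ n k, k ≤ n + 1 → a n k ∈ Set.Icc (0 : ℝ) 1 := by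
    intro n k hk
    rw [ha_eq n k hk]
    exact ⟨ENNReal.toReal_nonneg, htoReal_le_one _⟩
  -- low and high estimates
  have hlow : ∀ η : ℝ, 0 < η → ∀ n : ℕ, 1 ≤ n → ∀ k : ℕ, 1 ≤ k → (k : ℝ) ≤ (pbar - η) * n →
      a n k ≤ (μ {ω | η ≤ |(x n ω : ℝ) / n - pbar|}).toReal := by
    intro η hη n hn k hk1 hk2
    have hnpos : (0 : ℝ) < n := by exact_mod_cast hn
    have hkn : k ≤ n + 1 := by
      have hk3 : (k : ℝ) ≤ (n : ℝ) := by nlinarith [hpbar.2]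
      have : k ≤ n := by exact_mod_cast hk3
      omega
    rw [ha_eq n k hkn]
    apply ENNReal.toReal_mono (measure_ne_top μ _)
    apply measure_mono
    intro ω hω
    simp only [Set.mem_setOf_eq] at hω ⊢
    have hxk : (x n ω : ℝ) < k := by exact_mod_cast hω
    have h1 : (x n ω : ℝ) / n < pbar - η := by
      rw [div_lt_iff₀ hnpos]; nlinarith
    calc η ≤ -((x n ω : ℝ) / n - pbar) := by linarith
      _ ≤ |(x n ω : ℝ) / n - pbar| := neg_le_abs _
  have hhigh : ∀ η : ℝ, 0 < η → ∀ n : ℕ, 1 ≤ n → ∀ k : ℕ, k ≤ n → (pbar + η) * n ≤ (k : ℝ) →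
      1 - (μ {ω | η ≤ |(x n ω : ℝ) / n - pbar|}).toReal ≤ a n k := by
    intro η hη n hn k hkn hk
    have hnpos : (0 : ℝ) < n := by exact_mod_cast hn
    rw [ha_eq n k (by omega)]
    have hms : MeasurableSet {ω | x n ω < k} := hxmeas n measurableSet_Iio
    have hcompl : {ω | x n ω < k}ᶜ = {ω | k ≤ x n ω} := by
      ext ω; simp [not_lt]
    have h1 : μ {ω | k ≤ x n ω} ≤ μ {ω | η ≤ |(x n ω : ℝ) / n - pbar|} := by
      apply measure_mono
      intro ω hω
      simp only [Set.mem_setOf_eq] at hω ⊢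
      have hxk : (k : ℝ) ≤ (x n ω : ℝ) := by exact_mod_cast hω
      have h2 : pbar + η ≤ (x n ω : ℝ) / n := by
        rw [le_div_iff₀ hnpos]; nlinarith
      calc η ≤ (x n ω : ℝ) / n - pbar := by linarith
        _ ≤ |(x n ω : ℝ) / n - pbar| := le_abs_self _
    have h2 := prob_compl_eq_one_sub (μ := μ) hms
    rw [hcompl] at h2
    have h3 : (μ {ω | k ≤ x n ω}).toReal = 1 - (μ {ω | x n ω < k}).toReal := by
      rw [h2, ENNReal.toReal_sub_of_le (prob_le_one) ENNReal.one_ne_top, ENNReal.toReal_one]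
    have h4 : (μ {ω | k ≤ x n ω}).toReal
        ≤ (μ {ω | η ≤ |(x n ω : ℝ) / n - pbar|}).toReal :=
      ENNReal.toReal_mono (measure_ne_top μ _) h1
    linarith
  -- floor counting
  set C := ‖f‖ with hCdef
  have hCpos : 0 ≤ C := norm_nonneg f
  have hfb : ∀ t : ℝ, |f t| ≤ C := fun t => f.norm_coe_le_norm t
  set mn : ℕ → ℕ := fun n => ⌊pbar * n⌋₊ with hmndef
  have hmn_le : ∀ n : ℕ, mn n ≤ n := by
    intro n
    have h1 : pbar * n ≤ (n : ℝ) := by nlinarith [hpbar.1, hpbar.2, (Nat.cast_nonneg n : (0:ℝ) ≤ n)]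
    calc mn n ≤ ⌊(n : ℝ)⌋₊ := Nat.floor_le_floor h1
      _ = n := Nat.floor_natCast n
  have hmn_tend : Tendsto (fun n : ℕ => (mn n : ℝ) / n) atTop (𝓝 pbar) := by
    rw [tendsto_iff_dist_tendsto_zero]
    apply squeeze_zero' (Filter.Eventually.of_forall fun n => dist_nonneg)
      ?_ tendsto_one_div_atTop_nhds_zero_nat
    filter_upwards [eventually_ge_atTop 1] with n hn
    have hnpos : (0 : ℝ) < n := by exact_mod_cast hn
    have h1 : (mn n : ℝ) ≤ pbar * n := Nat.floor_le (mul_nonneg hpbar.1 (Nat.cast_nonneg n))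
    have h2 : pbar * n < mn n + 1 := Nat.lt_floor_add_one _
    have e1 : (mn n : ℝ) / n ≤ pbar := by rw [div_le_iff₀ hnpos]; linarith
    have hexp : (pbar - 1 / n) * n = pbar * n - 1 := by field_simp
    have e2 : pbar - 1 / n ≤ (mn n : ℝ) / n := by
      rw [le_div_iff₀ hnpos, hexp]; linarith
    have hinv : (0:ℝ) < 1 / n := by positivity
    rw [Real.dist_eq, abs_le]
    constructor <;> linarith
  have hG : Tendsto (fun n : ℕ => ((mn n : ℝ) / n) * f 0 + (1 - (mn n : ℝ) / n) * f 1)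
      atTop (𝓝 (pbar * f 0 + (1 - pbar) * f 1)) :=
    (hmn_tend.mul_const _).add ((tendsto_const_nhds.sub hmn_tend).mul_const _)
  obtain ⟨gg, hgg⟩ : ∃ gg : ℕ → ℕ → ℝ,
      ∀ m k : ℕ, gg m k = if (k : ℝ) ≤ pbar * m then f 0 else f 1 :=
    ⟨fun m k => if (k : ℝ) ≤ pbar * m then f 0 else f 1, fun m k => rfl⟩
  have hGsum : ∀ n : ℕ, 1 ≤ n →
      (1 / (n : ℝ)) * ∑ k ∈ Finset.Icc 1 n, gg n k
        = ((mn n : ℝ) / n) * f 0 + (1 - (mn n : ℝ) / n) * f 1 := by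
    intro n hn
    have hnpos : (0 : ℝ) < n := by exact_mod_cast hn
    have hfil : (Finset.Icc 1 n).filter (fun k : ℕ => (k : ℝ) ≤ pbar * n)
        = Finset.Icc 1 (mn n) := by
      ext k
      simp only [Finset.mem_filter, Finset.mem_Icc]
      constructor
      · rintro ⟨⟨hk1, _⟩, h3⟩
        exact ⟨hk1, Nat.le_floor h3⟩
      · rintro ⟨hk1, hk2⟩
        refine ⟨⟨hk1, hk2.trans (hmn_le n)⟩, ?_⟩
        calc (k : ℝ) ≤ mn n := by exact_mod_cast hk2
          _ ≤ pbar * n := Nat.floor_le (mul_nonneg hpbar.1 (Nat.cast_nonneg n))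
    have hcards := Finset.card_filter_add_card_filter_not
      (s := Finset.Icc 1 n) (p := fun k : ℕ => (k : ℝ) ≤ pbar * n)
    rw [hfil, Nat.card_Icc, Nat.card_Icc] at hcards
    simp only [hgg]
    rw [Finset.sum_ite, Finset.sum_const, Finset.sum_const, hfil, Nat.card_Icc]
    have hcard2 : ((Finset.Icc 1 n).filter (fun k : ℕ => ¬(k : ℝ) ≤ pbar * n)).card
        = n - mn n := by omega
    rw [hcard2]
    simp only [nsmul_eq_mul, Nat.add_sub_cancel]
    have hcast : ((n - mn n : ℕ) : ℝ) = (n : ℝ) - mn n := by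
      exact_mod_cast Nat.cast_sub (hmn_le n)
    rw [hcast]
    field_simp
  -- main epsilon argument
  rw [Metric.tendsto_atTop]
  intro ε hε
  obtain ⟨δ0, hδ0pos, hδ0⟩ := Metric.continuousAt_iff.mp (f.continuous.continuousAt (x := 0))
    (ε / 8) (by positivity)
  obtain ⟨δ1, hδ1pos, hδ1⟩ := Metric.continuousAt_iff.mp (f.continuous.continuousAt (x := 1))
    (ε / 8) (by positivity)
  set δ := min δ0 δ1 with hδdef
  have hδpos : 0 < δ := lt_min hδ0pos hδ1pos
  set η := ε / (32 * (C + 1)) with hηdef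
  have hηpos : 0 < η := by positivity
  have hr_ev : ∀ᶠ n : ℕ in atTop,
      (μ {ω | η ≤ |(x n ω : ℝ) / n - pbar|}).toReal < δ :=
    (hLLN η hηpos).eventually_lt_const hδpos
  have hGev : ∀ᶠ n : ℕ in atTop,
      dist (((mn n : ℝ) / n) * f 0 + (1 - (mn n : ℝ) / n) * f 1)
        (pbar * f 0 + (1 - pbar) * f 1) < ε / 4 := by
    have := hG.eventually (Metric.ball_mem_nhds _ (by positivity : (0:ℝ) < ε / 4))
    filter_upwards [this] with n hn using Metric.mem_ball.mp hn
  have hn8 : ∀ᶠ n : ℕ in atTop, 2 * C / (n : ℝ) < ε / 8 := by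
    have ht : Tendsto (fun n : ℕ => 2 * C / (n : ℝ)) atTop (𝓝 0) :=
      tendsto_const_div_atTop_nhds_zero_nat (2 * C)
    exact ht.eventually_lt_const (by positivity)
  have hev := hr_ev.and (hGev.and (hn8.and (eventually_ge_atTop 1)))
  rw [eventually_atTop] at hev
  obtain ⟨N, hN⟩ := hev
  refine ⟨N, fun n hn => ?_⟩
  obtain ⟨h_r, h_G, h_n8, hn1⟩ := hN n hn
  have hnpos : (0 : ℝ) < n := by exact_mod_cast hn1
  set r := (μ {ω | η ≤ |(x n ω : ℝ) / n - pbar|}).toReal with hrdef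
  have hr_nonneg : 0 ≤ r := ENNReal.toReal_nonneg
  set midset : Finset ℕ := (Finset.Icc 1 n).filter
    (fun k : ℕ => (pbar - η) * n < (k : ℝ) ∧ (k : ℝ) < (pbar + η) * n) with hmiddef
  -- pointwise bound
  have hpt : ∀ k ∈ Finset.Icc 1 n,
      |f (a n k) - gg n k| ≤ ε / 8 + (if k ∈ midset then 2 * C else 0) := by
    intro k hk
    obtain ⟨hk1, hk2⟩ := Finset.mem_Icc.mp hk
    by_cases hmid : k ∈ midset
    · rw [if_pos hmid]
      have habs : |f (a n k) - gg n k| ≤ |f (a n k)| + |gg n k| := abs_sub _ _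
      have hg : |gg n k| ≤ C := by
        rw [hgg]; split <;> exact hfb _
      have := hfb (a n k)
      have : 0 < ε / 8 := by positivity
      linarith [hfb (a n k)]
    · rw [if_neg hmid, add_zero]
      have hnotmid : ¬((pbar - η) * n < (k : ℝ) ∧ (k : ℝ) < (pbar + η) * n) :=
        fun h => hmid (Finset.mem_filter.mpr ⟨hk, h⟩)
      by_cases hlo : (k : ℝ) ≤ (pbar - η) * n
      · have hak_le : a n k ≤ r := hlow η hηpos n hn1 k hk1 hlo
        have hak_ge : 0 ≤ a n k := (ha_mem n k (by omega)).1
        have hdist : dist (a n k) 0 < δ0 := by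
          rw [Real.dist_eq, sub_zero, abs_of_nonneg hak_ge]
          exact lt_of_le_of_lt hak_le (h_r.trans_le (min_le_left _ _))
        have h1 := hδ0 hdist
        have hgk : gg n k = f 0 := by
          rw [hgg]
          have hle : (k : ℝ) ≤ pbar * n := le_trans hlo (by nlinarith)
          simp [hle]
        rw [hgk]
        rw [Real.dist_eq] at h1
        exact h1.le
      · push_neg at hlo
        have hhi : (pbar + η) * n ≤ (k : ℝ) := by
          by_contra hcon
          push_neg at hcon
          exact hnotmid ⟨hlo, hcon⟩
        have h1r : 1 - r ≤ a n k := hhigh η hηpos n hn1 k hk2 hhi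
        have hak1 : a n k ≤ 1 := (ha_mem n k (by omega)).2
        have hdist : dist (a n k) 1 < δ1 := by
          rw [Real.dist_eq, abs_sub_comm, abs_of_nonneg (by linarith)]
          have := h_r.trans_le (min_le_right δ0 δ1)
          linarith
        have h1 := hδ1 hdist
        have hgk : gg n k = f 1 := by
          rw [hgg]
          have hgt : pbar * n < (k : ℝ) := by nlinarith
          simp [not_le.mpr hgt]
        rw [hgk]
        rw [Real.dist_eq] at h1
        exact h1.le
  -- cardinality of the middle band
  have hmidcard : ((midset.card : ℕ) : ℝ) ≤ 2 * η * n + 1 := by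
    set A := ⌊max ((pbar - η) * n) 0⌋₊ with hAdef
    set B := ⌊(pbar + η) * n⌋₊ with hBdef
    have hBnn : (0 : ℝ) ≤ (pbar + η) * n := by nlinarith [hpbar.1]
    have hsub : midset ⊆ Finset.Ioc A B := by
      intro k hk
      obtain ⟨hk', h1, h2⟩ := Finset.mem_filter.mp hk
      obtain ⟨hk1, _⟩ := Finset.mem_Icc.mp hk'
      rw [Finset.mem_Ioc]
      constructor
      · have hkpos : (0 : ℝ) < k := by exact_mod_cast hk1
        have hmax : max ((pbar - η) * n) 0 < (k : ℝ) := max_lt h1 hkpos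
        have hA : (A : ℝ) ≤ max ((pbar - η) * n) 0 := Nat.floor_le (le_max_right _ _)
        exact_mod_cast hA.trans_lt hmax
      · exact Nat.le_floor h2.le
    have hcard : midset.card ≤ B - A := by
      rw [← Nat.card_Ioc]
      exact Finset.card_le_card hsub
    by_cases hAB : A ≤ B
    · have hBA : ((B - A : ℕ) : ℝ) = (B : ℝ) - A := Nat.cast_sub hAB
      have hBle : (B : ℝ) ≤ (pbar + η) * n := Nat.floor_le hBnn
      have hAgt : (pbar - η) * n - 1 ≤ (A : ℝ) := by
        have hlt := Nat.lt_floor_add_one (max ((pbar - η) * n) 0)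
        have hle := le_max_left ((pbar - η) * n) (0 : ℝ)
        rw [← hAdef] at hlt
        linarith
      have hexp : (pbar + η) * n - ((pbar - η) * n) = 2 * η * n := by ring
      calc ((midset.card : ℕ) : ℝ) ≤ ((B - A : ℕ) : ℝ) := by exact_mod_cast hcard
        _ = (B : ℝ) - A := hBA
        _ ≤ 2 * η * n + 1 := by linarith
    · push_neg at hAB
      have hz : B - A = 0 := Nat.sub_eq_zero_of_le hAB.le
      rw [hz] at hcard
      have : midset.card = 0 := Nat.le_zero.mp hcard
      rw [this]
      have : (0:ℝ) ≤ 2 * η * n := by positivity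
      push_cast
      linarith
  -- sum bound
  have hsum : ∑ k ∈ Finset.Icc 1 n, |f (a n k) - gg n k|
      ≤ n * (ε / 8) + midset.card * (2 * C) := by
    calc ∑ k ∈ Finset.Icc 1 n, |f (a n k) - gg n k|
        ≤ ∑ k ∈ Finset.Icc 1 n, (ε / 8 + if k ∈ midset then 2 * C else 0) :=
          Finset.sum_le_sum hpt
      _ = n * (ε / 8) + midset.card * (2 * C) := by
          rw [Finset.sum_add_distrib, Finset.sum_const, Nat.card_Icc,
            Finset.sum_ite_mem, Finset.inter_eq_right.mpr (Finset.filter_subset _ _),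
            Finset.sum_const]
          simp only [nsmul_eq_mul, Nat.add_sub_cancel]
          rfl
  -- distance from S_n to G_n
  have hS_G : dist ((1 / (n : ℝ)) * ∑ k ∈ Finset.Icc 1 n, f (a n k))
      (((mn n : ℝ) / n) * f 0 + (1 - (mn n : ℝ) / n) * f 1)
      ≤ ε / 8 + (2 * η * n + 1) * (2 * C) / n := by
    rw [← hGsum n hn1, Real.dist_eq, ← mul_sub, ← Finset.sum_sub_distrib, abs_mul,
      abs_of_nonneg (by positivity : (0:ℝ) ≤ 1 / (n:ℝ))]
    calc (1 / (n : ℝ)) * |∑ k ∈ Finset.Icc 1 n, (f (a n k) - gg n k)|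
        ≤ (1 / (n : ℝ)) * ∑ k ∈ Finset.Icc 1 n, |f (a n k) - gg n k| := by
          apply mul_le_mul_of_nonneg_left (Finset.abs_sum_le_sum_abs _ _) (by positivity)
      _ ≤ (1 / (n : ℝ)) * (n * (ε / 8) + midset.card * (2 * C)) := by
          apply mul_le_mul_of_nonneg_left hsum (by positivity)
      _ ≤ ε / 8 + (2 * η * n + 1) * (2 * C) / n := by
          have h1 : (1 / (n : ℝ)) * (n * (ε / 8)) = ε / 8 := by
            rw [one_div, inv_mul_eq_div]
            exact mul_div_cancel_left₀ _ (ne_of_gt hnpos)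
          have h2 : (midset.card : ℝ) * (2 * C) ≤ (2 * η * n + 1) * (2 * C) :=
            mul_le_mul_of_nonneg_right hmidcard (by positivity)
          have h3 : (1 / (n : ℝ)) * (midset.card * (2 * C))
              ≤ (2 * η * n + 1) * (2 * C) / n := by
            rw [one_div, inv_mul_eq_div]
            exact (div_le_div_iff_of_pos_right hnpos).mpr h2
          rw [mul_add, h1]
          linarith
  -- final assembly
  have hηbound : (2 * η * n + 1) * (2 * C) / n = 4 * C * η + 2 * C / n := by
    field_simp
    ring
  have h4Cη : 4 * C * η ≤ ε / 8 := by
    have hkey : 4 * C * η = (C / (C + 1)) * (ε / 8) := by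
      rw [hηdef]; field_simp; ring
    rw [hkey]
    have hfrac : C / (C + 1) ≤ 1 := by
      rw [div_le_one (by positivity)]; linarith
    nlinarith [hε]
  have htri := dist_triangle ((1 / (n : ℝ)) * ∑ k ∈ Finset.Icc 1 n, f (a n k))
    (((mn n : ℝ) / n) * f 0 + (1 - (mn n : ℝ) / n) * f 1)
    (pbar * f 0 + (1 - pbar) * f 1)
  have hSG' := hS_G
  rw [hηbound] at hSG'
  linarith
end

section
/- In the stratified case p_{n,k} = p_n, if the Cesàro averages (1/n)∑_{m=1}^n p_m converge to p̄, then the empirical distributions g_n converge weakly on [0,1] to p̄·δ_0 + (1−p̄)·δ_1. -/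
open Filter Topology Finset

namespace StratFrag

noncomputable def A (p : ℕ → ℝ) : ℕ → ℕ → ℝ
  | 0, k => if k = 0 then 0 else 1
  | (n+1), k => if k = 0 then 0 else
      p (n+1) * A p n (k-1) + (1 - p (n+1)) * A p n k

lemma A_zero (p : ℕ → ℝ) (n : ℕ) : A p n 0 = 0 := by
  cases n <;> simp [A]

lemma A_succ_succ (p : ℕ → ℝ) (n k : ℕ) :
    A p (n+1) (k+1) = p (n+1) * A p n k + (1 - p (n+1)) * A p n (k+1) := by
  simp [A]

lemma A_of_ge (p : ℕ → ℝ) : ∀ n k, n + 1 ≤ k → A p n k = 1 := by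
  intro n
  induction n with
  | zero => intro k hk; have : k ≠ 0 := by omega
            simp [A, this]
  | succ n ih =>
      intro k hk
      obtain ⟨j, rfl⟩ : ∃ j, k = j + 1 := ⟨k - 1, by omega⟩
      rw [A_succ_succ, ih j (by omega), ih (j+1) (by omega)]
      ring

lemma A_mem (p : ℕ → ℝ) (hp : ∀ n, p n ∈ Set.Icc (0:ℝ) 1) :
    ∀ n k, A p n k ∈ Set.Icc (0:ℝ) 1 := by
  intro n
  induction n with
  | zero => intro k; by_cases h : k = 0 <;> simp [A, h]
  | succ n ih =>
      intro k
      rcases k with _ | j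
      · simp [A_zero]
      · rw [A_succ_succ]
        obtain ⟨hp0, hp1⟩ := hp (n+1)
        obtain ⟨h10, h11⟩ := ih j
        obtain ⟨h20, h21⟩ := ih (j+1)
        constructor
        · nlinarith
        · nlinarith

lemma A_mono (p : ℕ → ℝ) (hp : ∀ n, p n ∈ Set.Icc (0:ℝ) 1) :
    ∀ n k, A p n k ≤ A p n (k+1) := by
  intro n
  induction n with
  | zero => intro k; rcases k with _ | j <;> simp [A]
  | succ n ih =>
      intro k
      rcases k with _ | j
      · rw [A_zero]
        exact (A_mem p hp (n+1) 1).1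
      · rw [A_succ_succ, A_succ_succ]
        obtain ⟨hp0, hp1⟩ := hp (n+1)
        have h1 := ih j
        have h2 := ih (j+1)
        nlinarith


variable (p : ℕ → ℝ)


noncomputable def D (n k : ℕ) : ℝ := A p n (k+1) - A p n k

lemma D_nonneg (hp : ∀ n, p n ∈ Set.Icc (0:ℝ) 1) (n k : ℕ) : 0 ≤ D p n k :=
  sub_nonneg.2 (A_mono p hp n k)

lemma D_eq_zero (n k : ℕ) (h : n + 1 ≤ k) : D p n k = 0 := by
  rw [D, A_of_ge p n (k+1) (by omega), A_of_ge p n k h, sub_self]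

lemma sum_D (n : ℕ) : ∑ k ∈ range (n+1), D p n k = 1 := by
  rw [show (∑ k ∈ range (n+1), D p n k) = A p n (n+1) - A p n 0 from
    Finset.sum_range_sub (A p n) (n+1)]
  rw [A_of_ge p n (n+1) le_rfl, A_zero, sub_zero]

noncomputable def Ds (n k : ℕ) : ℝ := if k = 0 then 0 else D p n (k-1)

lemma Ds_succ (n k : ℕ) : Ds p n (k+1) = D p n k := by simp [Ds]

lemma Ds_nonneg (hp : ∀ n, p n ∈ Set.Icc (0:ℝ) 1) (n k : ℕ) : 0 ≤ Ds p n k := by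
  rcases k with _ | j
  · simp [Ds]
  · rw [Ds_succ]; exact D_nonneg p hp n j

lemma D_rec (n : ℕ) : ∀ k, D p (n+1) k = p (n+1) * Ds p n k + (1 - p (n+1)) * Ds p n (k+1) := by
  intro k
  rcases k with _ | j
  · simp only [Ds, if_pos rfl, mul_zero, zero_add]
    rw [show (0:ℕ)+1-1 = 0 from rfl, if_neg one_ne_zero]
    rw [D, D, A_zero, A_succ_succ, A_zero]
    simp only [if_true]
    ring
  · rw [Ds_succ, Ds_succ, D, A_succ_succ, A_succ_succ, D, D]
    ring

noncomputable def W (n : ℕ) : ℝ := ∑ k ∈ range (n+1), (D p n k)^2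

noncomputable def U (n : ℕ) : ℝ := ∑ k ∈ range (n+2), (Ds p n (k+1) - Ds p n k)^2

lemma U_nonneg (n : ℕ) : 0 ≤ U p n := Finset.sum_nonneg fun _ _ => sq_nonneg _

lemma W_nonneg (n : ℕ) : 0 ≤ W p n := Finset.sum_nonneg fun _ _ => sq_nonneg _

lemma W_zero : W p 0 = 1 := by
  simp [W, D, A]

lemma sum_Ds_sq (n : ℕ) : ∑ k ∈ range (n+2), (Ds p n k)^2 = W p n := by
  rw [Finset.sum_range_succ' (fun k => (Ds p n k)^2) (n+1)]
  simp only [Ds_succ]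
  simp [W, Ds]

lemma sum_Ds_sq' (n : ℕ) : ∑ k ∈ range (n+2), (Ds p n (k+1))^2 = W p n := by
  simp only [Ds_succ]
  rw [Finset.sum_range_succ]
  rw [D_eq_zero p n (n+1) le_rfl]
  simp [W]

lemma W_succ (n : ℕ) :
    W p (n+1) = W p n - p (n+1) * (1 - p (n+1)) * U p n := by
  have : W p (n+1) = ∑ k ∈ range (n+2),
      (p (n+1) * Ds p n k + (1 - p (n+1)) * Ds p n (k+1))^2 := by
    rw [W]
    exact Finset.sum_congr rfl fun k _ => by rw [D_rec]
  rw [this]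
  have expand : ∀ k ∈ range (n+2),
      (p (n+1) * Ds p n k + (1 - p (n+1)) * Ds p n (k+1))^2
      = p (n+1) * (Ds p n k)^2 + (1 - p (n+1)) * (Ds p n (k+1))^2
        - p (n+1) * (1 - p (n+1)) * (Ds p n (k+1) - Ds p n k)^2 := by
    intro k _; ring
  rw [Finset.sum_congr rfl expand, Finset.sum_sub_distrib, Finset.sum_add_distrib,
    ← Finset.mul_sum, ← Finset.mul_sum, ← Finset.mul_sum,
    sum_Ds_sq, sum_Ds_sq', U]
  ring


lemma key (hp : ∀ n, p n ∈ Set.Icc (0:ℝ) 1) (n : ℕ) : (W p n)^3 ≤ 4 * U p n := by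
  obtain ⟨k0, hk0, hmax⟩ := Finset.exists_max_image (range (n+1)) (D p n)
    ⟨0, Finset.mem_range.2 (Nat.succ_pos n)⟩
  set M := D p n k0 with hMdef
  have hMnn : 0 ≤ M := D_nonneg p hp n k0
  -- W ≤ M
  have hWM : W p n ≤ M := by
    calc W p n = ∑ k ∈ range (n+1), (D p n k)^2 := rfl
      _ ≤ ∑ k ∈ range (n+1), M * D p n k := by
          refine Finset.sum_le_sum fun k hk => ?_
          have h1 := hmax k hk
          have h2 := D_nonneg p hp n k
          nlinarith
      _ = M := by rw [← Finset.mul_sum, sum_D, mul_one]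
  -- M^2 ≤ sum of |diffs| * sums
  have htel : M^2 = ∑ i ∈ range (k0+1), ((Ds p n (i+1))^2 - (Ds p n i)^2) := by
    rw [Finset.sum_range_sub (fun i => (Ds p n i)^2) (k0+1), Ds_succ]
    simp [Ds, hMdef]
  have hsub : M^2 ≤ ∑ i ∈ range (n+2),
      |Ds p n (i+1) - Ds p n i| * (Ds p n (i+1) + Ds p n i) := by
    rw [htel]
    have h1 : ∑ i ∈ range (k0+1), ((Ds p n (i+1))^2 - (Ds p n i)^2)
        ≤ ∑ i ∈ range (k0+1), |Ds p n (i+1) - Ds p n i| * (Ds p n (i+1) + Ds p n i) := by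
      refine Finset.sum_le_sum fun i _ => ?_
      have ha := Ds_nonneg p hp n (i+1)
      have hb := Ds_nonneg p hp n i
      have : (Ds p n (i+1))^2 - (Ds p n i)^2
          = (Ds p n (i+1) - Ds p n i) * (Ds p n (i+1) + Ds p n i) := by ring
      rw [this]
      exact mul_le_mul_of_nonneg_right (le_abs_self _) (by linarith)
    refine h1.trans (Finset.sum_le_sum_of_subset_of_nonneg ?_ fun i _ _ => ?_)
    · exact Finset.range_subset_range.2 (by have := Finset.mem_range.1 hk0; omega)
    · have ha := Ds_nonneg p hp n (i+1)
      have hb := Ds_nonneg p hp n i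
      positivity
  -- Cauchy-Schwarz
  have hCS : (∑ i ∈ range (n+2),
      |Ds p n (i+1) - Ds p n i| * (Ds p n (i+1) + Ds p n i))^2
      ≤ U p n * (4 * W p n) := by
    have := Finset.sum_mul_sq_le_sq_mul_sq (range (n+2))
      (fun i => |Ds p n (i+1) - Ds p n i|) (fun i => Ds p n (i+1) + Ds p n i)
    have e1 : ∑ i ∈ range (n+2), |Ds p n (i+1) - Ds p n i|^2 = U p n := by
      rw [U]; exact Finset.sum_congr rfl fun i _ => sq_abs _
    have e2 : ∑ i ∈ range (n+2), (Ds p n (i+1) + Ds p n i)^2 ≤ 4 * W p n := by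
      have : ∑ i ∈ range (n+2), (Ds p n (i+1) + Ds p n i)^2
          ≤ ∑ i ∈ range (n+2), (2*(Ds p n (i+1))^2 + 2*(Ds p n i)^2) := by
        refine Finset.sum_le_sum fun i _ => ?_
        nlinarith [sq_nonneg (Ds p n (i+1) - Ds p n i)]
      rw [Finset.sum_add_distrib, ← Finset.mul_sum, ← Finset.mul_sum,
        sum_Ds_sq, sum_Ds_sq'] at this
      linarith
    calc (∑ i ∈ range (n+2), |Ds p n (i+1) - Ds p n i| * (Ds p n (i+1) + Ds p n i))^2
        ≤ (∑ i ∈ range (n+2), |Ds p n (i+1) - Ds p n i|^2)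
          * ∑ i ∈ range (n+2), (Ds p n (i+1) + Ds p n i)^2 := this
      _ ≤ U p n * (4 * W p n) := by
          rw [e1]
          exact mul_le_mul_of_nonneg_left e2 (U_nonneg p n)
  have hM4 : M^4 ≤ U p n * (4 * W p n) := by
    have h2 : M^4 = (M^2)^2 := by ring
    rw [h2]
    exact (pow_le_pow_left₀ (sq_nonneg M) hsub 2).trans hCS
  have hW4 : (W p n)^4 ≤ U p n * (4 * W p n) :=
    (pow_le_pow_left₀ (W_nonneg p n) hWM 4).trans hM4
  rcases eq_or_lt_of_le (W_nonneg p n) with h0 | h0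
  · rw [← h0]
    have := U_nonneg p n
    nlinarith
  · have : (W p n)^3 * W p n ≤ (4 * U p n) * W p n := by nlinarith
    exact le_of_mul_le_mul_right this h0

lemma sum_pqU (N : ℕ) :
    ∑ m ∈ range N, p (m+1) * (1 - p (m+1)) * U p m = 1 - W p N := by
  have : ∀ m, p (m+1) * (1 - p (m+1)) * U p m = W p m - W p (m+1) := by
    intro m; rw [W_succ]; ring
  rw [Finset.sum_congr rfl fun m _ => this m, Finset.sum_range_sub' (W p) N, W_zero]

lemma sum_pqW3 (hp : ∀ n, p n ∈ Set.Icc (0:ℝ) 1) (N : ℕ) :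
    ∑ m ∈ range N, p (m+1) * (1 - p (m+1)) * (W p m)^3 ≤ 4 := by
  have h1 : ∑ m ∈ range N, p (m+1) * (1 - p (m+1)) * (W p m)^3
      ≤ ∑ m ∈ range N, 4 * (p (m+1) * (1 - p (m+1)) * U p m) := by
    refine Finset.sum_le_sum fun m _ => ?_
    have hkey := key p hp m
    have h0 := (hp (m+1)).1
    have h1 := (hp (m+1)).2
    have hpq : 0 ≤ p (m+1) * (1 - p (m+1)) := mul_nonneg h0 (by linarith)
    calc p (m+1) * (1 - p (m+1)) * (W p m)^3
        ≤ p (m+1) * (1 - p (m+1)) * (4 * U p m) := mul_le_mul_of_nonneg_left hkey hpq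
      _ = 4 * (p (m+1) * (1 - p (m+1)) * U p m) := by ring
  rw [← Finset.mul_sum, sum_pqU] at h1
  have := W_nonneg p N
  linarith

noncomputable def T (n : ℕ) : ℝ := ∑ j ∈ range n, A p n (j+1)

lemma T_succ (n : ℕ) : T p (n+1) = T p n + (1 - p (n+1)) := by
  have e : T p (n+1) = ∑ j ∈ range (n+1),
      (p (n+1) * A p n j + (1 - p (n+1)) * A p n (j+1)) :=
    Finset.sum_congr rfl fun j _ => A_succ_succ p n j
  rw [e, Finset.sum_add_distrib, ← Finset.mul_sum, ← Finset.mul_sum]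
  rw [Finset.sum_range_succ' (A p n) n, A_zero, add_zero]
  rw [Finset.sum_range_succ (fun j => A p n (j+1)) n, A_of_ge p n (n+1) le_rfl]
  show p (n+1) * T p n + (1 - p (n+1)) * (T p n + 1) = T p n + (1 - p (n+1))
  ring

lemma T_eq (n : ℕ) : T p n = n - ∑ m ∈ range n, p (m+1) := by
  induction n with
  | zero => simp [T]
  | succ n ih =>
      rw [T_succ, ih, Finset.sum_range_succ]
      push_cast
      ring

noncomputable def V (n : ℕ) : ℝ := ∑ j ∈ range n, A p n (j+1) * (1 - A p n (j+1))

lemma V_succ (n : ℕ) : V p (n+1) = V p n + p (n+1) * (1 - p (n+1)) * W p n := by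
  have e : ∀ j ∈ range (n+1), A p (n+1) (j+1) * (1 - A p (n+1) (j+1))
      = p (n+1) * (A p n j * (1 - A p n j))
        + (1 - p (n+1)) * (A p n (j+1) * (1 - A p n (j+1)))
        + p (n+1) * (1 - p (n+1)) * (A p n (j+1) - A p n j)^2 := by
    intro j _
    rw [A_succ_succ]
    ring
  rw [V, Finset.sum_congr rfl e, Finset.sum_add_distrib, Finset.sum_add_distrib,
    ← Finset.mul_sum, ← Finset.mul_sum, ← Finset.mul_sum]
  rw [Finset.sum_range_succ' (fun j => A p n j * (1 - A p n j)) n, A_zero]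
  rw [Finset.sum_range_succ (fun j => A p n (j+1) * (1 - A p n (j+1))) n,
    A_of_ge p n (n+1) le_rfl]
  have eW : ∑ j ∈ range (n+1), (A p n (j+1) - A p n j)^2 = W p n := rfl
  rw [eW]
  show p (n+1) * (V p n + 0 * (1-0)) + (1 - p (n+1)) * (V p n + 1 * (1-1))
      + p (n+1) * (1 - p (n+1)) * W p n = _
  ring

lemma V_eq (N : ℕ) : V p N = ∑ m ∈ range N, p (m+1) * (1 - p (m+1)) * W p m := by
  induction N with
  | zero => simp [V]
  | succ n ih => rw [V_succ, ih, Finset.sum_range_succ]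


lemma V_nonneg (hp : ∀ n, p n ∈ Set.Icc (0:ℝ) 1) (n : ℕ) : 0 ≤ V p n := by
  refine Finset.sum_nonneg fun j _ => ?_
  obtain ⟨h0, h1⟩ := A_mem p hp n (j+1)
  nlinarith

lemma V_le (hp : ∀ n, p n ∈ Set.Icc (0:ℝ) 1) {ε : ℝ} (hε : 0 < ε) (N : ℕ) :
    V p N ≤ ε * N / 4 + 4 / ε^2 := by
  have hterm : ∀ m ∈ range N, p (m+1) * (1 - p (m+1)) * W p m
      ≤ p (m+1) * (1 - p (m+1)) * ε
        + (p (m+1) * (1 - p (m+1)) * (W p m)^3) / ε^2 := by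
    intro m _
    have hW0 := W_nonneg p m
    set w := W p m
    have hpoly : w * ε^2 ≤ ε^3 + w^3 := by
      nlinarith [mul_nonneg (sq_nonneg (w - ε)) (by linarith : (0:ℝ) ≤ w + 2*ε),
        pow_nonneg hW0 3, pow_pos hε 3]
    have hWle : w ≤ ε + w^3 / ε^2 := by
      have h2 : w - ε ≤ w^3 / ε^2 := (le_div_iff₀ (by positivity)).2 (by nlinarith)
      linarith
    have hpq : 0 ≤ p (m+1) * (1 - p (m+1)) :=
      mul_nonneg (hp (m+1)).1 (by linarith [(hp (m+1)).2])
    calc p (m+1) * (1 - p (m+1)) * w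
        ≤ p (m+1) * (1 - p (m+1)) * (ε + w^3 / ε^2) :=
          mul_le_mul_of_nonneg_left hWle hpq
      _ = p (m+1) * (1 - p (m+1)) * ε
          + (p (m+1) * (1 - p (m+1)) * w^3) / ε^2 := by ring
  have h1 : V p N ≤ ∑ m ∈ range N, (p (m+1) * (1 - p (m+1)) * ε
      + (p (m+1) * (1 - p (m+1)) * (W p m)^3) / ε^2) := by
    rw [V_eq]; exact Finset.sum_le_sum hterm
  rw [Finset.sum_add_distrib] at h1
  have h2 : ∑ m ∈ range N, p (m+1) * (1 - p (m+1)) * ε ≤ ε * N / 4 := by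
    have : ∀ m ∈ range N, p (m+1) * (1 - p (m+1)) * ε ≤ ε / 4 := by
      intro m _
      have h0 := (hp (m+1)).1
      have h1 := (hp (m+1)).2
      nlinarith [sq_nonneg (p (m+1) - 1/2)]
    calc ∑ m ∈ range N, p (m+1) * (1 - p (m+1)) * ε ≤ ∑ _m ∈ range N, ε / 4 :=
          Finset.sum_le_sum this
      _ = ε * N / 4 := by rw [Finset.sum_const, card_range]; push_cast; ring
  have h3 : ∑ m ∈ range N, (p (m+1) * (1 - p (m+1)) * (W p m)^3) / ε^2 ≤ 4 / ε^2 := by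
    rw [← Finset.sum_div]
    exact div_le_div_of_nonneg_right (sum_pqW3 p hp N) (by positivity) |>.trans_eq rfl
  linarith

lemma V_div_tendsto (hp : ∀ n, p n ∈ Set.Icc (0:ℝ) 1) :
    Tendsto (fun n : ℕ => V p n / n) atTop (𝓝 0) := by
  rw [NormedAddCommGroup.tendsto_nhds_zero]
  intro ε hε
  have htail : ∀ᶠ n : ℕ in atTop, (4 / (ε/2)^2) / (n:ℝ) < ε / 2 :=
    (tendsto_const_div_atTop_nhds_zero_nat (4 / (ε/2)^2)).eventually
      (eventually_lt_nhds (half_pos hε))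
  filter_upwards [htail, eventually_ge_atTop 1] with n hn hn1
  have hnpos : (0:ℝ) < n := by exact_mod_cast hn1
  have hVn := V_le p hp (half_pos hε) n
  have hnn : 0 ≤ V p n / n := div_nonneg (V_nonneg p hp n) hnpos.le
  rw [Real.norm_eq_abs, abs_of_nonneg hnn]
  have : V p n / n ≤ ((ε/2) * n / 4 + 4 / (ε/2)^2) / n := by gcongr
  have heq : ((ε/2) * n / 4 + 4 / (ε/2)^2) / n = ε / 8 + (4 / (ε/2)^2) / n := by
    field_simp
    ring
  rw [heq] at this
  linarith

lemma pointwise_bound (f : BoundedContinuousFunction ℝ ℝ) {ε δ : ℝ}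
    (hε : 0 < ε) (hδ : 0 < δ) (hδ2 : δ ≤ 1/2)
    (h0 : ∀ x ∈ Set.Icc (0:ℝ) 1, x ≤ δ → |f x - f 0| ≤ ε)
    (h1 : ∀ x ∈ Set.Icc (0:ℝ) 1, 1 - δ ≤ x → |f x - f 1| ≤ ε)
    (x : ℝ) (hx : x ∈ Set.Icc (0:ℝ) 1) :
    |f x - ((1-x) * f 0 + x * f 1)|
      ≤ ε + ((‖f‖ + |f 0| + |f 1|)/δ^2) * (x*(1-x)) := by
  obtain ⟨hx0, hx1⟩ := hx
  obtain ⟨B, hBdef⟩ : ∃ B : ℝ, B = ‖f‖ + |f 0| + |f 1| := ⟨_, rfl⟩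
  obtain ⟨C, hCdef⟩ : ∃ C : ℝ, C = B / δ^2 := ⟨_, rfl⟩
  rw [← hBdef, ← hCdef]
  have hB : 0 ≤ B := by rw [hBdef]; positivity
  have hC4 : 4 * B ≤ C := by
    rw [hCdef, le_div_iff₀ (by positivity)]
    nlinarith [mul_nonneg hB (show (0:ℝ) ≤ 1 - 4*δ^2 by nlinarith)]
  have hC0 : 0 ≤ C := by rw [hCdef]; exact div_nonneg hB (by positivity)
  have hxle : x * (1-x) ≥ 0 := by nlinarith
  have hf01 : |f 0| + |f 1| ≤ B := by
    have := norm_nonneg f; rw [hBdef]; linarith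
  by_cases hcase0 : x ≤ δ
  · have hfx := h0 x ⟨hx0, hx1⟩ hcase0
    have hsplit : f x - ((1-x) * f 0 + x * f 1) = (f x - f 0) + x * (f 0 - f 1) := by ring
    have htri : |f x - ((1-x) * f 0 + x * f 1)| ≤ |f x - f 0| + x * (|f 0| + |f 1|) := by
      rw [hsplit]
      refine (abs_add_le _ _).trans ?_
      have : |x * (f 0 - f 1)| = x * |f 0 - f 1| := by
        rw [abs_mul, abs_of_nonneg hx0]
      rw [this]
      have := abs_sub (f 0) (f 1)
      nlinarith [abs_sub_abs_le_abs_sub (f 0) (f 1), abs_sub (f 0) (f 1)]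
    have hmid : x * (|f 0| + |f 1|) ≤ C * (x * (1-x)) := by
      have hhalf : (1:ℝ)/2 ≤ 1 - x := by linarith
      have h1 : x * (|f 0| + |f 1|) ≤ x * B := mul_le_mul_of_nonneg_left hf01 hx0
      have h2 : x * B ≤ (x * (1-x)) * (2 * B) := by
        nlinarith [mul_nonneg (mul_nonneg hx0 hB) (show (0:ℝ) ≤ 2*(1-x) - 1 by linarith)]
      have h3 : (x * (1-x)) * (2 * B) ≤ (x * (1-x)) * C :=
        mul_le_mul_of_nonneg_left (by linarith) hxle
      linarith
    linarith
  · by_cases hcase1 : 1 - δ ≤ x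
    · have hfx := h1 x ⟨hx0, hx1⟩ hcase1
      have hsplit : f x - ((1-x) * f 0 + x * f 1) = (f x - f 1) + (1-x) * (f 1 - f 0) := by
        ring
      have htri : |f x - ((1-x) * f 0 + x * f 1)|
          ≤ |f x - f 1| + (1-x) * (|f 0| + |f 1|) := by
        rw [hsplit]
        refine (abs_add_le _ _).trans ?_
        have h1x : (0:ℝ) ≤ 1 - x := by linarith
        have : |(1-x) * (f 1 - f 0)| = (1-x) * |f 1 - f 0| := by
          rw [abs_mul, abs_of_nonneg h1x]
        rw [this]
        nlinarith [abs_sub (f 1) (f 0)]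
      have hmid : (1-x) * (|f 0| + |f 1|) ≤ C * (x * (1-x)) := by
        have hhalf : (1:ℝ)/2 ≤ x := by linarith
        have h1x : (0:ℝ) ≤ 1 - x := by linarith
        have h1 : (1-x) * (|f 0| + |f 1|) ≤ (1-x) * B := mul_le_mul_of_nonneg_left hf01 h1x
        have h2 : (1-x) * B ≤ (x * (1-x)) * (2 * B) := by
          nlinarith [mul_nonneg (mul_nonneg h1x hB) (show (0:ℝ) ≤ 2*x - 1 by linarith)]
        have h3 : (x * (1-x)) * (2 * B) ≤ (x * (1-x)) * C :=
          mul_le_mul_of_nonneg_left (by linarith) hxle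
        linarith
      linarith
    · push_neg at hcase0 hcase1
      have hfx : |f x| ≤ ‖f‖ := by
        rw [← Real.norm_eq_abs]; exact f.norm_coe_le_norm x
      have htri : |f x - ((1-x) * f 0 + x * f 1)| ≤ B := by
        have h1 : |f x - ((1-x) * f 0 + x * f 1)|
            ≤ |f x| + (1-x) * |f 0| + x * |f 1| := by
          have e : f x - ((1-x) * f 0 + x * f 1) = f x + (-((1-x) * f 0) + -(x * f 1)) := by
            ring
          rw [e]
          refine (abs_add_le _ _).trans ?_
          have h2 := abs_add_le (-((1-x) * f 0)) (-(x * f 1))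
          rw [abs_neg, abs_neg, abs_mul, abs_mul, abs_of_nonneg hx0,
            abs_of_nonneg (by linarith : (0:ℝ) ≤ 1 - x)] at h2
          linarith
        have := abs_nonneg (f 0)
        have := abs_nonneg (f 1)
        rw [hBdef]
        nlinarith
      have hδx : δ^2 ≤ x * (1-x) := by nlinarith
      have : B ≤ C * (x * (1-x)) := by
        have : C * δ^2 = B := by
          rw [hCdef]; field_simp
        nlinarith
      linarith


lemma a_eq (p : ℕ → ℝ) (a : ℕ → ℕ → ℝ)
    (ha0 : ∀ n, a n 0 = 0) (ha1 : ∀ n, a n (n + 1) = 1)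
    (harec : ∀ n k, 1 ≤ n → 1 ≤ k → k ≤ n →
      a n k = p n * a (n - 1) (k - 1) + (1 - p n) * a (n - 1) k) :
    ∀ n k, k ≤ n + 1 → a n k = A p n k := by
  intro n
  induction n with
  | zero =>
      intro k hk
      interval_cases k
      · rw [ha0 0, A_zero]
      · rw [show (1:ℕ) = 0 + 1 from rfl, ha1 0]
        simp [A]
  | succ n ih =>
      intro k hk
      rcases Nat.eq_zero_or_pos k with rfl | hk1
      · rw [ha0, A_zero]
      · rcases eq_or_lt_of_le hk with rfl | hklt
        · rw [ha1 (n+1), A_of_ge p (n+1) (n+2) le_rfl]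
        · -- 1 ≤ k ≤ n + 1
          obtain ⟨j, rfl⟩ : ∃ j, k = j + 1 := ⟨k - 1, by omega⟩
          rw [harec (n+1) (j+1) (by omega) (by omega) (by omega)]
          simp only [Nat.add_sub_cancel]
          rw [ih j (by omega), ih (j+1) (by omega), A_succ_succ]


end StratFrag

open StratFrag

/-- Deterministic stratified fragmentation: if the Cesàro averages of `(p_n)` converge
to `p̄`, then the empirical distributions of break points converge weakly on `[0,1]`
to `p̄·δ₀ + (1-p̄)·δ₁`. -/
theorem stratified_empirical_weak_convergence
    (p : ℕ → ℝ) (hp : ∀ n, p n ∈ Set.Icc (0 : ℝ) 1)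
    (a : ℕ → ℕ → ℝ)
    (ha0 : ∀ n, a n 0 = 0) (ha1 : ∀ n, a n (n + 1) = 1)
    (harec : ∀ n k, 1 ≤ n → 1 ≤ k → k ≤ n →
      a n k = p n * a (n - 1) (k - 1) + (1 - p n) * a (n - 1) k)
    (pbar : ℝ)
    (hcesaro : Tendsto (fun n : ℕ => (∑ m ∈ Finset.Icc 1 n, p m) / n) atTop (𝓝 pbar)) :
    ∀ f : BoundedContinuousFunction ℝ ℝ,
      Tendsto (fun n : ℕ => (1 / (n : ℝ)) * ∑ k ∈ Finset.Icc 1 n, f (a n k)) atTop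
        (𝓝 (pbar * f 0 + (1 - pbar) * f 1)) := by
  intro f
  have haA := a_eq p a ha0 ha1 harec
  -- rewrite Icc sums as range sums
  have hIcc : ∀ (g : ℕ → ℝ) (n : ℕ), ∑ k ∈ Finset.Icc 1 n, g k
      = ∑ j ∈ range n, g (j+1) := by
    intro g n
    rw [← Finset.Ico_add_one_right_eq_Icc, Finset.sum_Ico_eq_sum_range]
    rw [show n + 1 - 1 = n from rfl]
    exact Finset.sum_congr rfl fun j _ => by rw [add_comm]
  have hsum : ∀ n : ℕ, ∑ k ∈ Finset.Icc 1 n, f (a n k)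
      = ∑ j ∈ range n, f (A p n (j+1)) := by
    intro n
    rw [hIcc]
    exact Finset.sum_congr rfl fun j hj => by
      rw [haA n (j+1) (by have := Finset.mem_range.1 hj; omega)]
  -- Cesàro in range form
  set c : ℕ → ℝ := fun n => (∑ m ∈ range n, p (m+1)) / n with hcdef
  have hc : Tendsto c atTop (𝓝 pbar) := by
    refine hcesaro.congr fun n => ?_
    rw [hcdef]; simp only; rw [hIcc]
  -- comparison sequence
  set L : ℕ → ℝ := fun n => f 0 * c n + f 1 * (1 - c n) with hLdef
  have hL : Tendsto L atTop (𝓝 (f 0 * pbar + f 1 * (1 - pbar))) :=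
    (tendsto_const_nhds.mul hc).add
      (tendsto_const_nhds.mul (tendsto_const_nhds.sub hc))
  set S : ℕ → ℝ := fun n => (1 / (n : ℝ)) * ∑ j ∈ range n, f (A p n (j+1)) with hSdef
  -- S - L → 0
  have hSL : Tendsto (fun n => S n - L n) atTop (𝓝 0) := by
    rw [NormedAddCommGroup.tendsto_nhds_zero]
    intro ε hε
    -- continuity at the endpoints
    obtain ⟨δ₀, hδ₀, h₀⟩ := Metric.continuousAt_iff.1
      (f.continuous.continuousAt : ContinuousAt f 0) (ε/4) (by linarith)
    obtain ⟨δ₁, hδ₁, h₁⟩ := Metric.continuousAt_iff.1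
      (f.continuous.continuousAt : ContinuousAt f 1) (ε/4) (by linarith)
    obtain ⟨δ, hδdef⟩ : ∃ δ : ℝ, δ = min (δ₀/2) (min (δ₁/2) (1/2)) := ⟨_, rfl⟩
    have hδpos : 0 < δ := by rw [hδdef]; positivity
    have hδhalf : δ ≤ 1/2 := by rw [hδdef]; exact (min_le_right _ _).trans (min_le_right _ _)
    have h0' : ∀ x ∈ Set.Icc (0:ℝ) 1, x ≤ δ → |f x - f 0| ≤ ε/4 := by
      intro x hx hxδ
      have hd : dist x 0 < δ₀ := by
        rw [Real.dist_eq, sub_zero, abs_of_nonneg hx.1]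
        have : δ ≤ δ₀/2 := by rw [hδdef]; exact min_le_left _ _
        linarith
      have := h₀ hd
      rw [Real.dist_eq] at this
      linarith
    have h1' : ∀ x ∈ Set.Icc (0:ℝ) 1, 1 - δ ≤ x → |f x - f 1| ≤ ε/4 := by
      intro x hx hxδ
      have hd : dist x 1 < δ₁ := by
        rw [Real.dist_eq, abs_of_nonpos (by linarith [hx.2])]
        have : δ ≤ δ₁/2 := by rw [hδdef]; exact (min_le_right _ _).trans (min_le_left _ _)
        linarith
      have := h₁ hd
      rw [Real.dist_eq] at this
      linarith
    obtain ⟨C, hCdef⟩ : ∃ C : ℝ, C = (‖f‖ + |f 0| + |f 1|)/δ^2 := ⟨_, rfl⟩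
    have hC0 : 0 ≤ C := by
      rw [hCdef]; exact div_nonneg (by positivity) (sq_nonneg δ)
    have hCV : Tendsto (fun n : ℕ => C * (V p n / n)) atTop (𝓝 0) := by
      have := (V_div_tendsto p hp).const_mul C
      rwa [mul_zero] at this
    have hev := hCV.eventually (eventually_lt_nhds (half_pos hε))
    filter_upwards [hev, eventually_ge_atTop 1] with n hn2 hn1
    have hnpos : (0:ℝ) < n := by exact_mod_cast hn1
    have hnne : (n:ℝ) ≠ 0 := ne_of_gt hnpos
    -- rewrite L n
    have hLrew : L n = (1 / (n:ℝ)) * ∑ j ∈ range n,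
        ((1 - A p n (j+1)) * f 0 + A p n (j+1) * f 1) := by
      have e1 : ∑ j ∈ range n, ((1 - A p n (j+1)) * f 0 + A p n (j+1) * f 1)
          = ((n:ℝ) - T p n) * f 0 + T p n * f 1 := by
        rw [Finset.sum_add_distrib, ← Finset.sum_mul, ← Finset.sum_mul,
          Finset.sum_sub_distrib, Finset.sum_const, card_range, nsmul_eq_mul, mul_one]
        rfl
      rw [e1, T_eq, hLdef, hcdef]
      simp only
      field_simp
      ring
    -- the difference bound
    have hdiff : S n - L n = (1 / (n:ℝ)) * ∑ j ∈ range n,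
        (f (A p n (j+1)) - ((1 - A p n (j+1)) * f 0 + A p n (j+1) * f 1)) := by
      rw [hSdef, hLrew]
      simp only
      rw [Finset.sum_sub_distrib]
      ring
    have habs : |S n - L n| ≤ ε/4 + C * (V p n / n) := by
      rw [hdiff, abs_mul, abs_of_nonneg (by positivity : (0:ℝ) ≤ 1/(n:ℝ))]
      have h1 : |∑ j ∈ range n,
          (f (A p n (j+1)) - ((1 - A p n (j+1)) * f 0 + A p n (j+1) * f 1))|
          ≤ ∑ j ∈ range n, (ε/4 + C * (A p n (j+1) * (1 - A p n (j+1)))) := by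
        refine (Finset.abs_sum_le_sum_abs _ _).trans (Finset.sum_le_sum fun j _ => ?_)
        have := pointwise_bound f (by linarith : (0:ℝ) < ε/4) hδpos hδhalf h0' h1'
          (A p n (j+1)) (A_mem p hp n (j+1))
        rwa [← hCdef] at this
      have h2 : ∑ j ∈ range n, (ε/4 + C * (A p n (j+1) * (1 - A p n (j+1))))
          = n * (ε/4) + C * V p n := by
        rw [Finset.sum_add_distrib, Finset.sum_const, card_range, nsmul_eq_mul,
          ← Finset.mul_sum]
        rfl
      calc (1/(n:ℝ)) * |∑ j ∈ range n,
            (f (A p n (j+1)) - ((1 - A p n (j+1)) * f 0 + A p n (j+1) * f 1))|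
          ≤ (1/(n:ℝ)) * (n * (ε/4) + C * V p n) := by
            refine mul_le_mul_of_nonneg_left (h1.trans_eq h2) (by positivity)
        _ = ε/4 + C * (V p n / n) := by field_simp
    rw [Real.norm_eq_abs]
    calc |S n - L n| ≤ ε/4 + C * (V p n / n) := habs
      _ < ε/4 + ε/2 := by linarith
      _ < ε := by linarith
  -- assemble
  have hmain : Tendsto S atTop (𝓝 (f 0 * pbar + f 1 * (1 - pbar))) := by
    have := hSL.add hL
    rw [zero_add] at this
    exact this.congr fun n => by ring
  have hlim : f 0 * pbar + f 1 * (1 - pbar) = pbar * f 0 + (1 - pbar) * f 1 := by ring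
  rw [← hlim]
  exact hmain.congr fun n => by rw [hSdef]; simp only; rw [hsum n]
end

section
/- If (P_n)_{n≥1} are i.i.d. random variables in [0,1] with mean p̄ = E[P_1], and splitting proportions are P_{n,k} = P_n, then almost surely the random empirical distributions G_n converge weakly on [0,1] to p̄·δ_0 + (1−p̄)·δ_1. -/
open MeasureTheory ProbabilityTheory Filter Topology

/-!
`a n k` is the distribution function `k ↦ ℙ(S_n < k)` of a Poisson–binomial variable
`S_n = B_1 + ⋯ + B_n` with independent `B_i ~ Bernoulli(p_i)`: the recursion for `a` is the
recursion `S_n = S_{n-1} + B_n`. Hence `S_n` has mean `M_n = ∑ p_i` and variance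
`∑ p_i (1 - p_i) ≤ n / 4`, and Chebyshev's inequality puts `a n (i + 1)` within `ε` of `0` when
`i ≤ M_n - r` and within `ε` of `1` when `i ≥ M_n + r - 1`, as soon as `n ≤ 4 ε r²`. Taking
`r = η n`, all but `O(η n)` of the `n` break points are near `0` (about `M_n` of them) or near `1`,
so the average of a bounded function continuous at `0` and `1` is close to
`(M_n / n) f 0 + (1 - M_n / n) f 1`. Almost surely `M_n / n → p̄` by the strong law of large
numbers.
-/

open Finset

lemma sum_mul_one_sub_le {ι : Type*} (s : Finset ι) (x : ι → ℝ) :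
    ∑ i ∈ s, x i * (1 - x i) ≤ s.card / 4 := by
  calc ∑ i ∈ s, x i * (1 - x i) ≤ ∑ _i ∈ s, (1 / 4 : ℝ) :=
        sum_le_sum fun i _ => by nlinarith [sq_nonneg (x i - 1 / 2)]
    _ = s.card / 4 := by rw [sum_const, nsmul_eq_mul]; ring

lemma card_filter_lt_lt_le (s : Finset ℕ) {u v : ℝ} (huv : u ≤ v) :
    ((s.filter fun i : ℕ => u < i ∧ (i : ℝ) < v).card : ℝ) < v - u + 1 := by
  have hsub : s.filter (fun i : ℕ => u < i ∧ (i : ℝ) < v) ⊆ Ico ⌈u⌉₊ ⌈v⌉₊ := fun i hi => by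
    rw [mem_filter] at hi
    exact mem_Ico.mpr ⟨Nat.ceil_le.mpr hi.2.1.le, Nat.lt_ceil.mpr hi.2.2⟩
  have hceil : ⌈v⌉₊ ≤ ⌈u⌉₊ + ⌈v - u⌉₊ := by
    simpa using Nat.ceil_add_le u (v - u)
  have hcard : (s.filter fun i : ℕ => u < i ∧ (i : ℝ) < v).card ≤ ⌈v - u⌉₊ :=
    (card_le_card hsub).trans (by rw [Nat.card_Ico]; omega)
  calc ((s.filter fun i : ℕ => u < i ∧ (i : ℝ) < v).card : ℝ) ≤ ⌈v - u⌉₊ := by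
        exact_mod_cast hcard
    _ < v - u + 1 := Nat.ceil_lt_add_one (by linarith)

lemma sum_ite_natCast_lt (n : ℕ) {M : ℝ} (hM : M ≤ n) (x y : ℝ) :
    ∑ i ∈ range n, (if (i : ℝ) < M then x else y) = ⌈M⌉₊ * x + (n - ⌈M⌉₊) * y := by
  have hMn : ⌈M⌉₊ ≤ n := Nat.ceil_le.mpr hM
  have hlt : (range n).filter (fun i : ℕ => (i : ℝ) < M) = range ⌈M⌉₊ := by
    ext i; simp only [mem_filter, mem_range, ← Nat.lt_ceil]; omega
  have hge : (range n).filter (fun i : ℕ => ¬ (i : ℝ) < M) = Ico ⌈M⌉₊ n := by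
    ext i; simp only [mem_filter, mem_range, mem_Ico, ← Nat.lt_ceil]; omega
  rw [sum_ite, hlt, hge, sum_const, sum_const, card_range, Nat.card_Ico, nsmul_eq_mul,
    nsmul_eq_mul, Nat.cast_sub hMn]

lemma abs_sum_sub_le_of_concentrated (f : ℝ → ℝ) (x : ℕ → ℝ) {n : ℕ} {B δ M r : ℝ}
    (hB : ∀ y, |f y| ≤ B) (hδ : 0 ≤ δ) (hM₀ : 0 ≤ M) (hMn : M ≤ n) (hr : 1 ≤ r)
    (hlow : ∀ i < n, (i : ℝ) + r ≤ M → |f (x i) - f 0| ≤ δ)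
    (hhigh : ∀ i < n, M + r ≤ i + 1 → |f (x i) - f 1| ≤ δ) :
    |∑ i ∈ range n, f (x i) - (M * f 0 + (n - M) * f 1)| ≤ n * δ + 2 * B * (2 * r + 2) := by
  set g : ℕ → ℝ := fun i => if (i : ℝ) < M then f 0 else f 1
  have hB₀ : 0 ≤ B := (abs_nonneg _).trans (hB 0)
  have hdiff : ∀ y z, |f y - f z| ≤ 2 * B := fun y z =>
    (abs_sub _ _).trans (by linarith [hB y, hB z])
  have termwise : ∀ i ∈ range n,
      |f (x i) - g i| ≤ δ + if M - r < i ∧ (i : ℝ) < M + r then 2 * B else 0 := by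
    intro i hi
    have hi := mem_range.mp hi
    by_cases hlo : (i : ℝ) + r ≤ M
    · have : g i = f 0 := if_pos (by linarith)
      rw [this]; split_ifs <;> linarith [hlow i hi hlo]
    by_cases hhi : M + r ≤ i + 1
    · have : g i = f 1 := if_neg (by linarith)
      rw [this]; split_ifs <;> linarith [hhigh i hi hhi]
    · have : |f (x i) - g i| ≤ 2 * B := by simp only [g]; split_ifs <;> exact hdiff _ _
      rw [if_pos ⟨by linarith, by linarith⟩]
      linarith
  have hbad : ∑ i ∈ range n, (if M - r < i ∧ (i : ℝ) < M + r then 2 * B else 0) ≤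
      (2 * r + 1) * (2 * B) := by
    rw [← sum_filter, sum_const, nsmul_eq_mul]
    have := card_filter_lt_lt_le (range n) (show M - r ≤ M + r by linarith)
    exact mul_le_mul_of_nonneg_right (by linarith) (by linarith)
  have hstep : |∑ i ∈ range n, g i - (M * f 0 + (n - M) * f 1)| ≤ 2 * B := by
    rw [sum_ite_natCast_lt n hMn, show (⌈M⌉₊ : ℝ) * f 0 + (n - ⌈M⌉₊) * f 1 -
      (M * f 0 + (n - M) * f 1) = (⌈M⌉₊ - M) * (f 0 - f 1) by ring, abs_mul]
    have : |(⌈M⌉₊ : ℝ) - M| ≤ 1 := abs_le.mpr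
      ⟨by linarith [Nat.le_ceil M], by linarith [Nat.ceil_lt_add_one hM₀]⟩
    simpa using mul_le_mul this (hdiff 0 1) (abs_nonneg _) zero_le_one
  calc |∑ i ∈ range n, f (x i) - (M * f 0 + (n - M) * f 1)|
      ≤ |∑ i ∈ range n, (f (x i) - g i)| +
          |∑ i ∈ range n, g i - (M * f 0 + (n - M) * f 1)| := by
        rw [sum_sub_distrib]; exact abs_sub_le _ _ _
    _ ≤ ∑ i ∈ range n, (δ + if M - r < i ∧ (i : ℝ) < M + r then 2 * B else 0) + 2 * B :=
        add_le_add ((abs_sum_le_sum_abs _ _).trans (sum_le_sum termwise)) hstep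
    _ ≤ n * δ + 2 * B * (2 * r + 2) := by
        rw [sum_add_distrib, sum_const, card_range, nsmul_eq_mul]; linarith

structure IsStratifiedBreakPoints (p : ℕ → ℝ) (a : ℕ → ℕ → ℝ) : Prop where
  zero : ∀ n, a n 0 = 0
  last : ∀ n, a n (n + 1) = 1
  succ : ∀ n j, j ≤ n → a (n + 1) (j + 1) = p (n + 1) * a n j + (1 - p (n + 1)) * a n (j + 1)

/-- `𝔼[φ(S_n)]` when `a n k = ℙ(S_n < k)`, written through the tails
`ℙ(S_n > i) = 1 - a n (i + 1)`. -/
def cdfExpect (a : ℕ → ℕ → ℝ) (n : ℕ) (φ : ℕ → ℝ) : ℝ :=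
  φ 0 + ∑ i ∈ range n, (φ (i + 1) - φ i) * (1 - a n (i + 1))

@[simp]
lemma cdfExpect_zero (a : ℕ → ℕ → ℝ) (φ : ℕ → ℝ) : cdfExpect a 0 φ = φ 0 := by
  simp [cdfExpect]

@[simp]
lemma cdfExpect_const (a : ℕ → ℕ → ℝ) (n : ℕ) (c : ℝ) : cdfExpect a n (fun _ => c) = c := by
  simp [cdfExpect]

lemma cdfExpect_const_mul (a : ℕ → ℕ → ℝ) (n : ℕ) (c : ℝ) (φ : ℕ → ℝ) :
    cdfExpect a n (fun i => c * φ i) = c * cdfExpect a n φ := by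
  simp only [cdfExpect, mul_add, mul_sum, ← mul_sub, mul_assoc]

lemma cdfExpect_indicator_le (a : ℕ → ℕ → ℝ) {n k : ℕ} (hk : k < n) :
    cdfExpect a n (fun i => if i ≤ k then 1 else 0) = a n (k + 1) := by
  have jump : ∀ i, ((if i + 1 ≤ k then (1 : ℝ) else 0) - if i ≤ k then 1 else 0) =
      if k = i then -1 else 0 := by
    intro i; split_ifs <;> first | omega | norm_num
  simp only [cdfExpect, jump, ite_mul, zero_mul, sum_ite_eq, mem_range, if_pos hk]
  norm_num

lemma cdfExpect_indicator_lt (a : ℕ → ℕ → ℝ) {n k : ℕ} (hk : k < n) :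
    cdfExpect a n (fun i => if k < i then 1 else 0) = 1 - a n (k + 1) := by
  have jump : ∀ i, ((if k < i + 1 then (1 : ℝ) else 0) - if k < i then 1 else 0) =
      if k = i then 1 else 0 := by
    intro i; split_ifs <;> first | omega | norm_num
  simp only [cdfExpect, jump, ite_mul, zero_mul, sum_ite_eq, mem_range, if_pos hk]
  norm_num

namespace IsStratifiedBreakPoints

variable {p : ℕ → ℝ} {a : ℕ → ℕ → ℝ} (h : IsStratifiedBreakPoints p a)
include h

lemma cdfExpect_succ (n : ℕ) (φ : ℕ → ℝ) :
    cdfExpect a (n + 1) φ =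
      p (n + 1) * cdfExpect a n (fun i => φ (i + 1)) + (1 - p (n + 1)) * cdfExpect a n φ := by
  have tails : ∑ i ∈ range (n + 1), (φ (i + 1) - φ i) * (1 - a (n + 1) (i + 1)) =
      p (n + 1) * ∑ i ∈ range (n + 1), (φ (i + 1) - φ i) * (1 - a n i) +
        (1 - p (n + 1)) * ∑ i ∈ range (n + 1), (φ (i + 1) - φ i) * (1 - a n (i + 1)) := by
    rw [mul_sum, mul_sum, ← sum_add_distrib]
    refine sum_congr rfl fun i hi => ?_
    rw [h.succ n i (Nat.lt_succ_iff.mp (mem_range.mp hi))]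
    ring
  rw [cdfExpect, tails, sum_range_succ', sum_range_succ (fun i => _ * (1 - a n (i + 1))),
    h.zero, h.last, cdfExpect, cdfExpect]
  ring

lemma cdfExpect_sq_sub (n : ℕ) (c : ℝ) :
    cdfExpect a n (fun i => ((i : ℝ) - c) ^ 2) =
      ∑ i ∈ range n, p (i + 1) * (1 - p (i + 1)) + (∑ i ∈ range n, p (i + 1) - c) ^ 2 := by
  induction n generalizing c with
  | zero => simp
  | succ n ih =>
    have shift : (fun i : ℕ => (((i + 1 : ℕ) : ℝ) - c) ^ 2) =
        fun i : ℕ => ((i : ℝ) - (c - 1)) ^ 2 := by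
      ext i; push_cast; ring
    rw [h.cdfExpect_succ, shift, ih, ih, sum_range_succ, sum_range_succ]
    ring

variable (hp : ∀ n, p n ∈ Set.Icc (0 : ℝ) 1)
include hp

lemma cdfExpect_mono {n : ℕ} {φ ψ : ℕ → ℝ}
    (hφψ : ∀ i ≤ n, φ i ≤ ψ i) : cdfExpect a n φ ≤ cdfExpect a n ψ := by
  induction n generalizing φ ψ with
  | zero => simpa using hφψ 0 le_rfl
  | succ n ih =>
    obtain ⟨hp₀, hp₁⟩ := hp (n + 1)
    rw [h.cdfExpect_succ, h.cdfExpect_succ]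
    have hshift := ih fun i hi => hφψ (i + 1) (by omega)
    have hsame := ih fun i hi => hφψ i (by omega)
    gcongr

lemma mem_Icc {n i : ℕ} (hi : i < n) : a n (i + 1) ∈ Set.Icc (0 : ℝ) 1 := by
  rw [← cdfExpect_indicator_le a hi]
  constructor
  · simpa using h.cdfExpect_mono hp (n := n) (φ := fun _ => 0)
      (ψ := fun j => if j ≤ i then 1 else 0) fun j _ => by positivity
  · simpa using h.cdfExpect_mono hp (n := n) (φ := fun j => if j ≤ i then 1 else 0)
      (ψ := fun _ => 1) fun j _ => by split_ifs <;> norm_num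

lemma sq_mul_le_of_le_mean {n k : ℕ} (hk : k < n) (hkM : (k : ℝ) ≤ ∑ i ∈ range n, p (i + 1)) :
    (∑ i ∈ range n, p (i + 1) - k) ^ 2 * a n (k + 1) ≤
      ∑ i ∈ range n, p (i + 1) * (1 - p (i + 1)) := by
  set M := ∑ i ∈ range n, p (i + 1)
  calc (M - k) ^ 2 * a n (k + 1)
      = cdfExpect a n (fun i => (M - k) ^ 2 * if i ≤ k then 1 else 0) := by
        rw [cdfExpect_const_mul, cdfExpect_indicator_le a hk]
    _ ≤ cdfExpect a n (fun i => ((i : ℝ) - M) ^ 2) := by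
        refine h.cdfExpect_mono hp fun i _ => ?_
        split_ifs with hik
        · have : (i : ℝ) ≤ k := by exact_mod_cast hik
          nlinarith
        · simp only [mul_zero]; positivity
    _ = ∑ i ∈ range n, p (i + 1) * (1 - p (i + 1)) := by
        rw [h.cdfExpect_sq_sub, sub_self]; ring

lemma sq_mul_le_of_mean_le {n k : ℕ} (hk : k < n) (hkM : ∑ i ∈ range n, p (i + 1) ≤ k + 1) :
    ((k : ℝ) + 1 - ∑ i ∈ range n, p (i + 1)) ^ 2 * (1 - a n (k + 1)) ≤
      ∑ i ∈ range n, p (i + 1) * (1 - p (i + 1)) := by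
  set M := ∑ i ∈ range n, p (i + 1)
  calc ((k : ℝ) + 1 - M) ^ 2 * (1 - a n (k + 1))
      = cdfExpect a n (fun i => ((k : ℝ) + 1 - M) ^ 2 * if k < i then 1 else 0) := by
        rw [cdfExpect_const_mul, cdfExpect_indicator_lt a hk]
    _ ≤ cdfExpect a n (fun i => ((i : ℝ) - M) ^ 2) := by
        refine h.cdfExpect_mono hp fun i _ => ?_
        split_ifs with hki
        · have : (k : ℝ) + 1 ≤ i := by exact_mod_cast hki
          nlinarith
        · simp only [mul_zero]; positivity
    _ = ∑ i ∈ range n, p (i + 1) * (1 - p (i + 1)) := by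
        rw [h.cdfExpect_sq_sub, sub_self]; ring

lemma le_of_add_le_mean {n i : ℕ} {ε r : ℝ} (hr : 0 < r) (hnr : (n : ℝ) ≤ 4 * ε * r ^ 2)
    (hi : i < n) (hiM : (i : ℝ) + r ≤ ∑ j ∈ range n, p (j + 1)) : a n (i + 1) ≤ ε := by
  have hvar : ∑ j ∈ range n, p (j + 1) * (1 - p (j + 1)) ≤ n / 4 := by
    simpa using sum_mul_one_sub_le (range n) fun j => p (j + 1)
  have hr_sq : r ^ 2 ≤ (∑ j ∈ range n, p (j + 1) - i) ^ 2 := by nlinarith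
  have cheb : r ^ 2 * a n (i + 1) ≤ n / 4 :=
    (mul_le_mul_of_nonneg_right hr_sq (h.mem_Icc hp hi).1).trans
      ((h.sq_mul_le_of_le_mean hp hi (by linarith)).trans hvar)
  exact le_of_mul_le_mul_left (by nlinarith) (by positivity : 0 < r ^ 2)

lemma one_sub_le_of_mean_add_le {n i : ℕ} {ε r : ℝ} (hr : 0 < r) (hnr : (n : ℝ) ≤ 4 * ε * r ^ 2)
    (hi : i < n) (hiM : ∑ j ∈ range n, p (j + 1) + r ≤ i + 1) : 1 - ε ≤ a n (i + 1) := by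
  have hvar : ∑ j ∈ range n, p (j + 1) * (1 - p (j + 1)) ≤ n / 4 := by
    simpa using sum_mul_one_sub_le (range n) fun j => p (j + 1)
  have hr_sq : r ^ 2 ≤ ((i : ℝ) + 1 - ∑ j ∈ range n, p (j + 1)) ^ 2 := by nlinarith
  have cheb : r ^ 2 * (1 - a n (i + 1)) ≤ n / 4 :=
    (mul_le_mul_of_nonneg_right hr_sq (sub_nonneg.mpr (h.mem_Icc hp hi).2)).trans
      ((h.sq_mul_le_of_mean_le hp hi (by linarith)).trans hvar)
  linarith [le_of_mul_le_mul_left (cheb.trans (by nlinarith : (n : ℝ) / 4 ≤ r ^ 2 * ε))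
    (by positivity : 0 < r ^ 2)]

lemma abs_sum_sub_le {f : ℝ → ℝ} {n : ℕ} {B ε δ r : ℝ} (hB : ∀ y, |f y| ≤ B) (hδ : 0 ≤ δ)
    (hf₀ : ∀ y ∈ Set.Icc 0 ε, |f y - f 0| ≤ δ) (hf₁ : ∀ y ∈ Set.Icc (1 - ε) 1, |f y - f 1| ≤ δ)
    (hr : 1 ≤ r) (hnr : (n : ℝ) ≤ 4 * ε * r ^ 2) :
    |∑ i ∈ range n, f (a n (i + 1)) -
        ((∑ i ∈ range n, p (i + 1)) * f 0 + (n - ∑ i ∈ range n, p (i + 1)) * f 1)|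
      ≤ n * δ + 2 * B * (2 * r + 2) := by
  have hM₀ : 0 ≤ ∑ i ∈ range n, p (i + 1) := sum_nonneg fun i _ => (hp (i + 1)).1
  have hMn : ∑ i ∈ range n, p (i + 1) ≤ n := by
    simpa using sum_le_sum fun i (_ : i ∈ range n) => (hp (i + 1)).2
  refine abs_sum_sub_le_of_concentrated f (fun i => a n (i + 1)) hB hδ hM₀ hMn hr
    (fun i hi hiM => hf₀ _ ⟨(h.mem_Icc hp hi).1, h.le_of_add_le_mean hp (by linarith) hnr hi hiM⟩)
    (fun i hi hiM => hf₁ _ ⟨h.one_sub_le_of_mean_add_le hp (by linarith) hnr hi hiM,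
      (h.mem_Icc hp hi).2⟩)

lemma eventually_abs_average_sub_lt {f : ℝ → ℝ} {B δ : ℝ} (hB : ∀ y, |f y| ≤ B)
    (hf₀ : ContinuousAt f 0) (hf₁ : ContinuousAt f 1) (hδ : 0 < δ) :
    ∀ᶠ n : ℕ in atTop, |(1 / (n : ℝ)) * ∑ i ∈ range n, f (a n (i + 1)) -
      ((∑ i ∈ range n, p (i + 1)) / n * f 0 + (1 - (∑ i ∈ range n, p (i + 1)) / n) * f 1)| < δ := by
  obtain ⟨ε₀, hε₀, hc₀⟩ := Metric.continuousAt_iff.mp hf₀ (δ / 4) (by positivity)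
  obtain ⟨ε₁, hε₁, hc₁⟩ := Metric.continuousAt_iff.mp hf₁ (δ / 4) (by positivity)
  obtain ⟨ε, hε, hε₀', hε₁'⟩ : ∃ ε > 0, ε < ε₀ ∧ ε < ε₁ :=
    ⟨min ε₀ ε₁ / 2, by positivity, by linarith [min_le_left ε₀ ε₁, lt_min hε₀ hε₁],
      by linarith [min_le_right ε₀ ε₁, lt_min hε₀ hε₁]⟩
  have near₀ : ∀ y ∈ Set.Icc 0 ε, |f y - f 0| ≤ δ / 4 := fun y hy =>
    (hc₀ (by rw [Real.dist_eq, sub_zero, abs_of_nonneg hy.1]; linarith [hy.2])).le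
  have near₁ : ∀ y ∈ Set.Icc (1 - ε) 1, |f y - f 1| ≤ δ / 4 := fun y hy =>
    (hc₁ (by rw [Real.dist_eq, abs_lt]; constructor <;> linarith [hy.1, hy.2])).le
  have hB₀ : 0 ≤ B := (abs_nonneg _).trans (hB 0)
  -- the Chebyshev window is `r = η n`, with `η` small enough that `2 B (2 r + 2) < δ n / 2`
  set η := δ / (16 * (B + 1))
  have hη : 0 < η := by positivity
  have hBη : 16 * (B + 1) * η = δ := by simp only [η]; field_simp
  filter_upwards
    [tendsto_natCast_atTop_atTop.eventually_ge_atTop (max (1 / η) (1 / (4 * ε * η ^ 2)))] with n hn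
  obtain ⟨hn₁, hn₂⟩ := max_le_iff.mp hn
  have hn : 0 < (n : ℝ) := lt_of_lt_of_le (by positivity) hn₁
  have hr : 1 ≤ η * n := by rwa [div_le_iff₀ hη, mul_comm] at hn₁
  have hnr : (n : ℝ) ≤ 4 * ε * (η * n) ^ 2 := by
    rw [div_le_iff₀ (by positivity)] at hn₂; nlinarith
  have key := h.abs_sum_sub_le hp hB (by positivity) near₀ near₁ hr hnr
  have hwindow : 2 * B * (2 * (η * n) + 2) ≤ δ / 2 * n := by nlinarith
  rw [show (1 / (n : ℝ)) * ∑ i ∈ range n, f (a n (i + 1)) -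
      ((∑ i ∈ range n, p (i + 1)) / n * f 0 + (1 - (∑ i ∈ range n, p (i + 1)) / n) * f 1) =
      (∑ i ∈ range n, f (a n (i + 1)) -
        ((∑ i ∈ range n, p (i + 1)) * f 0 + (n - ∑ i ∈ range n, p (i + 1)) * f 1)) / n by
      field_simp, abs_div, abs_of_pos hn, div_lt_iff₀ hn]
  linarith [mul_pos hδ hn]

theorem tendsto_average {f : ℝ → ℝ} {B q : ℝ} (hB : ∀ y, |f y| ≤ B)
    (hf₀ : ContinuousAt f 0) (hf₁ : ContinuousAt f 1)
    (hmean : Tendsto (fun n : ℕ => (∑ i ∈ range n, p (i + 1)) / n) atTop (𝓝 q)) :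
    Tendsto (fun n : ℕ => (1 / (n : ℝ)) * ∑ i ∈ range n, f (a n (i + 1))) atTop
      (𝓝 (q * f 0 + (1 - q) * f 1)) := by
  have hmix := (hmean.mul_const (f 0)).add
    (((tendsto_const_nhds (x := (1 : ℝ))).sub hmean).mul_const (f 1))
  suffices hsub : Tendsto (fun n : ℕ => (1 / (n : ℝ)) * ∑ i ∈ range n, f (a n (i + 1)) -
      ((∑ i ∈ range n, p (i + 1)) / n * f 0 + (1 - (∑ i ∈ range n, p (i + 1)) / n) * f 1))
      atTop (𝓝 0) by
    simpa using hsub.add hmix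
  rw [Metric.tendsto_nhds]
  intro δ hδ
  simpa only [Real.dist_eq, sub_zero] using h.eventually_abs_average_sub_lt hp hB hf₀ hf₁ hδ

end IsStratifiedBreakPoints

theorem random_stratified_empirical_weak_convergence_general
    {Ω : Type*} [MeasurableSpace Ω] (μ : Measure Ω) [IsProbabilityMeasure μ]
    (P : ℕ → Ω → ℝ)
    (hindep : iIndepFun P μ)
    (hident : ∀ n, IdentDistrib (P n) (P 1) μ μ)
    (hrange : ∀ n ω, P n ω ∈ Set.Icc (0 : ℝ) 1)
    (pbar : ℝ) (hpbar : pbar = ∫ ω, P 1 ω ∂μ)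
    (A : ℕ → ℕ → Ω → ℝ)
    (hA0 : ∀ n ω, A n 0 ω = 0) (hA1 : ∀ n ω, A n (n + 1) ω = 1)
    (hArec : ∀ n k, 1 ≤ n → 1 ≤ k → k ≤ n → ∀ ω,
      A n k ω = P n ω * A (n - 1) (k - 1) ω + (1 - P n ω) * A (n - 1) k ω) :
    ∀ᵐ ω ∂μ, ∀ f : BoundedContinuousFunction ℝ ℝ,
      Tendsto (fun n : ℕ => (1 / (n : ℝ)) * ∑ k ∈ Finset.Icc 1 n, f (A n k ω)) atTop
        (𝓝 (pbar * f 0 + (1 - pbar) * f 1)) := by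
  have hint : Integrable (P 1) μ :=
    .of_bound (hident 1).aemeasurable_fst.aestronglyMeasurable 1
      (ae_of_all _ fun ω => abs_le.mpr ⟨by linarith [(hrange 1 ω).1], (hrange 1 ω).2⟩)
  have hslln := strong_law_ae_real (fun i => P (i + 1)) hint
    (fun i j hij => hindep.indepFun (by omega)) (fun i => hident (i + 1))
  filter_upwards [hslln] with ω hmean f
  have hω : IsStratifiedBreakPoints (fun n => P n ω) (fun n k => A n k ω) :=
    ⟨fun n => hA0 n ω, fun n => hA1 n ω, fun n j hj => by
      simpa using hArec (n + 1) (j + 1) (by omega) (by omega) (by omega) ω⟩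
  have hB : ∀ y, |f y| ≤ ‖f‖ := f.norm_coe_le_norm
  have hsum : ∀ n, ∑ k ∈ Icc 1 n, f (A n k ω) = ∑ i ∈ range n, f (A n (i + 1) ω) := fun n => by
    rw [← Ico_add_one_right_eq_Icc, range_eq_Ico, sum_Ico_add' (fun k => f (A n k ω)), zero_add]
  simp_rw [hsum, hpbar]
  exact hω.tendsto_average (fun n => hrange n ω) hB f.continuous.continuousAt
    f.continuous.continuousAt hmean

/-- Random stratified fragmentation: with i.i.d. splitting proportions `(P_n)` in `[0,1]`
of mean `p̄`, almost surely the random empirical distributions of break points converge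
weakly on `[0,1]` to `p̄·δ₀ + (1-p̄)·δ₁`. -/
theorem random_stratified_empirical_weak_convergence
    {Ω : Type*} [MeasurableSpace Ω] (μ : Measure Ω) [IsProbabilityMeasure μ]
    (P : ℕ → Ω → ℝ)
    (hmeas : ∀ n, Measurable (P n))
    (hindep : iIndepFun P μ)
    (hident : ∀ n, IdentDistrib (P n) (P 1) μ μ)
    (hrange : ∀ n ω, P n ω ∈ Set.Icc (0 : ℝ) 1)
    (pbar : ℝ) (hpbar : pbar = ∫ ω, P 1 ω ∂μ)
    (A : ℕ → ℕ → Ω → ℝ)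
    (hA0 : ∀ n ω, A n 0 ω = 0) (hA1 : ∀ n ω, A n (n + 1) ω = 1)
    (hArec : ∀ n k, 1 ≤ n → 1 ≤ k → k ≤ n → ∀ ω,
      A n k ω = P n ω * A (n - 1) (k - 1) ω + (1 - P n ω) * A (n - 1) k ω) :
    ∀ᵐ ω ∂μ, ∀ f : BoundedContinuousFunction ℝ ℝ,
      Tendsto (fun n : ℕ => (1 / (n : ℝ)) * ∑ k ∈ Finset.Icc 1 n, f (A n k ω)) atTop
        (𝓝 (pbar * f 0 + (1 - pbar) * f 1)) :=
  random_stratified_empirical_weak_convergence_general μ P hindep hident hrange pbar hpbar A hA0 hA1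
    hArec
end

section
/- Suppose there exist sequences (m_n) in ℝ and (σ_n) in (0,∞) with σ_n → ∞ such that P((x_n − m_n)/σ_n ≤ t) → Φ(t) for all t ∈ ℝ, where Φ is the standard normal CDF. Then for all 0 < x ≤ y < 1, (n/σ_n)·g_n([x,y]) → Q(y) − Q(x), where Q = Φ^{−1} is the standard normal quantile function. -/
open MeasureTheory ProbabilityTheory Filter Topology
open scoped NNReal

/-- The standard normal cumulative distribution function `Φ`. -/
noncomputable def stdGaussianCDF (t : ℝ) : ℝ :=
  (ProbabilityTheory.gaussianReal 0 1 (Set.Iic t)).toReal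

/-- The standard normal quantile function `Q = Φ⁻¹`. -/
noncomputable def stdGaussianQuantile : ℝ → ℝ :=
  Function.invFun stdGaussianCDF

section PhiFacts

lemma stdGaussianCDF_nonneg (t : ℝ) : 0 ≤ stdGaussianCDF t := ENNReal.toReal_nonneg

lemma stdGaussianCDF_le_one (t : ℝ) : stdGaussianCDF t ≤ 1 := by
  have := measure_mono (μ := gaussianReal 0 1) (Set.subset_univ (Set.Iic t))
  simpa [stdGaussianCDF] using ENNReal.toReal_mono (by simp) this

lemma stdGaussianCDF_diff {s t : ℝ} (h : s ≤ t) :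
    stdGaussianCDF t - stdGaussianCDF s = (gaussianReal 0 1 (Set.Ioc s t)).toReal := by
  have hU : Set.Iic t = Set.Iic s ∪ Set.Ioc s t := (Set.Iic_union_Ioc_eq_Iic h).symm
  have hd : Disjoint (Set.Iic s) (Set.Ioc s t) := by
    simpa using Set.Iic_disjoint_Ioc (le_refl s)
  rw [stdGaussianCDF, stdGaussianCDF, hU, measure_union hd measurableSet_Ioc,
    ENNReal.toReal_add (measure_ne_top _ _) (measure_ne_top _ _)]
  ring

lemma gaussianReal_Ioc_pos {s t : ℝ} (h : s < t) : 0 < gaussianReal 0 1 (Set.Ioc s t) := by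
  rcases eq_or_lt_of_le (zero_le : 0 ≤ gaussianReal 0 1 (Set.Ioc s t)) with h0 | h0
  · exfalso
    have := (gaussianReal_absolutelyContinuous' 0 one_ne_zero) h0.symm
    rw [Real.volume_Ioc] at this
    simp only [ENNReal.ofReal_eq_zero] at this
    linarith
  · exact h0

lemma stdGaussianCDF_strictMono : StrictMono stdGaussianCDF := by
  intro s t h
  have := stdGaussianCDF_diff h.le
  have hpos : 0 < (gaussianReal 0 1 (Set.Ioc s t)).toReal :=
    ENNReal.toReal_pos (gaussianReal_Ioc_pos h).ne' (measure_ne_top _ _)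
  linarith

lemma stdGaussianCDF_pos (t : ℝ) : 0 < stdGaussianCDF t :=
  lt_of_le_of_lt (stdGaussianCDF_nonneg (t - 1)) (stdGaussianCDF_strictMono (by linarith))

lemma stdGaussianCDF_lt_one (t : ℝ) : stdGaussianCDF t < 1 :=
  lt_of_lt_of_le (stdGaussianCDF_strictMono (show t < t + 1 by linarith))
    (stdGaussianCDF_le_one (t + 1))

lemma gaussianPDF_le_one (x : ℝ) : gaussianPDF 0 1 x ≤ 1 := by
  rw [gaussianPDF]
  refine ENNReal.ofReal_le_one.mpr ?_
  rw [gaussianPDFReal]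
  have h1 : Real.exp (-(x - 0) ^ 2 / (2 * (1:ℝ≥0))) ≤ 1 := by
    rw [Real.exp_le_one_iff]
    have h0 : (0:ℝ) ≤ (x - 0)^2 := sq_nonneg _
    have h2 : (0:ℝ) < 2 * ((1:ℝ≥0):ℝ) := by norm_num
    apply div_nonpos_of_nonpos_of_nonneg <;> [linarith; positivity]
  have h2 : (1:ℝ) ≤ Real.sqrt (2 * Real.pi * (1:ℝ≥0)) := by
    rw [show ((1:ℝ≥0):ℝ) = 1 by norm_num, mul_one]
    rw [show (1:ℝ) = Real.sqrt 1 by simp]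
    exact Real.sqrt_le_sqrt (by nlinarith [Real.pi_gt_three])
  calc (Real.sqrt (2 * Real.pi * (1:ℝ≥0)))⁻¹ * Real.exp (-(x - 0) ^ 2 / (2 * (1:ℝ≥0)))
      ≤ (Real.sqrt (2 * Real.pi * (1:ℝ≥0)))⁻¹ * 1 := by
        apply mul_le_mul_of_nonneg_left h1 (by positivity)
    _ ≤ 1 := by
        rw [mul_one]
        exact inv_le_one_of_one_le₀ h2

lemma gaussianReal_Ioc_le {s t : ℝ} (h : s ≤ t) :
    gaussianReal 0 1 (Set.Ioc s t) ≤ ENNReal.ofReal (t - s) := by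
  rw [gaussianReal_apply 0 one_ne_zero]
  calc ∫⁻ x in Set.Ioc s t, gaussianPDF 0 1 x
      ≤ ∫⁻ _ in Set.Ioc s t, 1 := setLIntegral_mono measurable_const fun x _ => gaussianPDF_le_one x
    _ = volume (Set.Ioc s t) := by simp
    _ = ENNReal.ofReal (t - s) := Real.volume_Ioc

lemma stdGaussianCDF_lipschitz : LipschitzWith 1 stdGaussianCDF := by
  refine LipschitzWith.of_dist_le_mul fun s t => ?_
  wlog h : t ≤ s generalizing s t
  · rw [dist_comm, dist_comm s t]; exact this t s (le_of_not_ge h)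
  rw [Real.dist_eq, Real.dist_eq,
    abs_of_nonneg (by linarith [(stdGaussianCDF_strictMono.le_iff_le).mpr h] :
      (0:ℝ) ≤ stdGaussianCDF s - stdGaussianCDF t),
    abs_of_nonneg (by linarith : (0:ℝ) ≤ s - t), NNReal.coe_one, one_mul]
  rw [stdGaussianCDF_diff h]
  have := gaussianReal_Ioc_le h
  calc (gaussianReal 0 1 (Set.Ioc t s)).toReal ≤ (ENNReal.ofReal (s - t)).toReal :=
        ENNReal.toReal_mono (by simp) this
    _ = s - t := ENNReal.toReal_ofReal (by linarith)

lemma stdGaussianCDF_continuous : Continuous stdGaussianCDF :=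
  stdGaussianCDF_lipschitz.continuous

lemma stdGaussianCDF_tendsto_atTop : Tendsto stdGaussianCDF atTop (𝓝 1) := by
  have h := tendsto_measure_Iic_atTop (gaussianReal 0 1)
  have : Tendsto (fun t => (gaussianReal 0 1 (Set.Iic t)).toReal) atTop
      (𝓝 ((gaussianReal 0 1 Set.univ).toReal)) :=
    (ENNReal.tendsto_toReal (measure_ne_top _ _)).comp h
  have h1 : Tendsto (fun t => (gaussianReal 0 1 (Set.Iic t)).toReal) atTop (𝓝 1) := by
    simpa using this
  exact h1

lemma stdGaussianCDF_tendsto_atBot : Tendsto stdGaussianCDF atBot (𝓝 0) := by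
  have hbound : ∀ t : ℝ, stdGaussianCDF t ≤ 1 - (gaussianReal 0 1 (Set.Ici (t+1))).toReal := by
    intro t
    have hsub : Set.Ici (t+1) ⊆ (Set.Iic t)ᶜ := by
      intro z hz
      simp only [Set.mem_compl_iff, Set.mem_Iic, not_le]
      have : t + 1 ≤ z := hz
      linarith
    have h1 : gaussianReal 0 1 (Set.Iic t) + gaussianReal 0 1 (Set.Iic t)ᶜ = 1 := by
      rw [measure_add_measure_compl measurableSet_Iic, measure_univ]
    have h2 : gaussianReal 0 1 (Set.Ici (t+1)) ≤ gaussianReal 0 1 (Set.Iic t)ᶜ := measure_mono hsub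
    have h3 := ENNReal.toReal_mono (measure_ne_top _ _) h2
    have h4 : (gaussianReal 0 1 (Set.Iic t)).toReal + ((gaussianReal 0 1 (Set.Iic t)ᶜ)).toReal = 1 := by
      rw [← ENNReal.toReal_add (measure_ne_top _ _) (measure_ne_top _ _), h1]; simp
    rw [stdGaussianCDF]; linarith
  have hIci : Tendsto (fun t : ℝ => 1 - (gaussianReal 0 1 (Set.Ici (t+1))).toReal) atBot (𝓝 0) := by
    have h := tendsto_measure_Ici_atBot (gaussianReal 0 1)
    have h2 : Tendsto (fun t : ℝ => (gaussianReal 0 1 (Set.Ici (t+1))).toReal) atBot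
        (𝓝 ((gaussianReal 0 1 Set.univ).toReal)) :=
      ((ENNReal.tendsto_toReal (measure_ne_top _ _)).comp h).comp
        (tendsto_atBot_add_const_right _ 1 tendsto_id)
    have : (gaussianReal 0 1 Set.univ).toReal = 1 := by simp
    rw [this] at h2
    have h3 := (tendsto_const_nhds (x := (1:ℝ)) (f := atBot (α := ℝ))).sub h2
    simpa using h3
  exact tendsto_of_tendsto_of_tendsto_of_le_of_le tendsto_const_nhds hIci
    (fun t => stdGaussianCDF_nonneg t) hbound

lemma exists_stdGaussianCDF_eq {s : ℝ} (h0 : 0 < s) (h1 : s < 1) :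
    ∃ t, stdGaussianCDF t = s := by
  obtain ⟨t0, ht0⟩ := (stdGaussianCDF_tendsto_atBot.eventually (eventually_lt_nhds h0)).exists
  obtain ⟨t1, ht1⟩ := (stdGaussianCDF_tendsto_atTop.eventually (eventually_gt_nhds h1)).exists
  have hle : t0 ≤ t1 := by
    by_contra hc
    push_neg at hc
    have := stdGaussianCDF_strictMono hc
    linarith
  have := intermediate_value_Icc hle stdGaussianCDF_continuous.continuousOn
  have hs : s ∈ Set.Icc (stdGaussianCDF t0) (stdGaussianCDF t1) := ⟨ht0.le, ht1.le⟩
  obtain ⟨t, _, ht⟩ := this hs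
  exact ⟨t, ht⟩

lemma stdGaussianCDF_quantile {s : ℝ} (h0 : 0 < s) (h1 : s < 1) :
    stdGaussianCDF (stdGaussianQuantile s) = s :=
  Function.invFun_eq (exists_stdGaussianCDF_eq h0 h1)

end PhiFacts

/-- Auxiliary: the chain `x` is measurable with respect to any σ-algebra making the
relevant `y`'s measurable. -/
lemma chain_measurable {Ω : Type*} (y : ℕ → ℕ → Ω → ℕ) (x : ℕ → Ω → ℕ)
    (hx0 : ∀ ω, x 0 ω = 0)
    (hxrec : ∀ n, 1 ≤ n → ∀ ω, x n ω = x (n - 1) ω + y n (x (n - 1) ω + 1) ω)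
    (m' : MeasurableSpace Ω) {N : ℕ} (hy : ∀ i k, i ≤ N → Measurable[m'] (y i k)) :
    ∀ j, j ≤ N → Measurable[m'] (x j) := by
  letI : MeasurableSpace Ω := m'
  intro j
  induction j with
  | zero =>
    intro _
    have hx : x 0 = fun _ => 0 := funext hx0
    rw [hx]; exact measurable_const
  | succ i ih =>
    intro hiN
    have hxi := ih (by omega)
    have hrec := hxrec (i+1) (by omega)
    simp only [Nat.add_sub_cancel] at hrec
    have hx : x (i+1) = fun ω => x i ω + y (i+1) (x i ω + 1) ω := funext hrec
    rw [hx]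
    refine Measurable.add hxi ?_
    have hcomp : (fun ω => y (i+1) (x i ω + 1) ω)
        = (fun q : Ω × ℕ => y (i+1) (q.2 + 1) q.1) ∘ (fun ω => (ω, x i ω)) := rfl
    rw [hcomp]
    have hg : Measurable (fun ω => (ω, x i ω) : Ω → Ω × ℕ) := measurable_id.prodMk hxi
    exact Measurable.comp
      (measurable_from_prod_countable_left (f := fun q : Ω × ℕ => y (i+1) (q.2 + 1) q.1)
        (fun c => hy (i+1) (c+1) hiN)) hg

/-- If `(x_n - m_n)/σ_n` satisfies a CLT with `σ_n → ∞`, then for `0 < u ≤ v < 1`,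
`(n/σ_n)·g_n([u,v]) → Q(v) - Q(u)`. -/
theorem empirical_bulk_convergence_of_CLT
    {Ω : Type*} [MeasurableSpace Ω] (μ : Measure Ω) [IsProbabilityMeasure μ]
    (p : ℕ → ℕ → ℝ) (hp : ∀ n k, 1 ≤ k → k ≤ n → p n k ∈ Set.Icc (0 : ℝ) 1)
    (a : ℕ → ℕ → ℝ)
    (ha0 : ∀ n, a n 0 = 0) (ha1 : ∀ n, a n (n + 1) = 1)
    (harec : ∀ n k, 1 ≤ n → 1 ≤ k → k ≤ n →
      a n k = p n k * a (n - 1) (k - 1) + (1 - p n k) * a (n - 1) k)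
    (y : ℕ → ℕ → Ω → ℕ)
    (hy01 : ∀ n k ω, y n k ω ≤ 1)
    (hymeas : ∀ n k, Measurable (y n k))
    (hindep : iIndepFun
      (fun nk : ℕ × ℕ => y nk.1 nk.2) μ)
    (hbern : ∀ n k, 1 ≤ k → k ≤ n → μ {ω | y n k ω = 1} = ENNReal.ofReal (p n k))
    (x : ℕ → Ω → ℕ)
    (hx0 : ∀ ω, x 0 ω = 0)
    (hxrec : ∀ n, 1 ≤ n → ∀ ω, x n ω = x (n - 1) ω + y n (x (n - 1) ω + 1) ω)
    (m : ℕ → ℝ) (σ : ℕ → ℝ) (hσpos : ∀ n, 0 < σ n)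
    (hσ : Tendsto σ atTop atTop)
    (hCLT : ∀ t : ℝ, Tendsto
      (fun n : ℕ => (μ {ω | ((x n ω : ℝ) - m n) / σ n ≤ t}).toReal) atTop
      (𝓝 (stdGaussianCDF t))) :
    ∀ u v : ℝ, 0 < u → u ≤ v → v < 1 →
      Tendsto (fun n : ℕ =>
          (∑ k ∈ Finset.Icc 1 n, if u ≤ a n k ∧ a n k ≤ v then (1 : ℝ) else 0) / σ n)
        atTop (𝓝 (stdGaussianQuantile v - stdGaussianQuantile u)) := by
  -- measurability of the chain
  have hxmeas : ∀ n, Measurable (x n) := fun n =>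
    chain_measurable y x hx0 hxrec _ (fun i k _ => hymeas i k) n le_rfl
  -- the chain is bounded by n
  have hxle : ∀ n ω, x n ω ≤ n := by
    intro n
    induction n with
    | zero => intro ω; simp [hx0 ω]
    | succ j ih =>
      intro ω
      have hr := hxrec (j+1) (by omega) ω
      simp only [Nat.add_sub_cancel] at hr
      have h1 := hy01 (j+1) (x j ω + 1) ω
      have h2 := ih ω
      omega
  -- independence of x N and y (N+1) k
  have hIndepXY : ∀ N k, IndepFun (x N) (y (N+1) k) μ := by
    intro N k
    have h_le : ∀ q : ℕ × ℕ,
        MeasurableSpace.comap (y q.1 q.2) (inferInstance : MeasurableSpace ℕ) ≤ _ :=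
      fun q => (hymeas q.1 q.2).comap_le
    have hd : Disjoint {q : ℕ × ℕ | q.1 ≤ N} {q : ℕ × ℕ | q = (N+1, k)} := by
      rw [Set.disjoint_left]
      rintro ⟨i, j⟩ hi hj
      simp only [Set.mem_setOf_eq, Prod.mk.injEq] at hi hj
      omega
    have h := indep_iSup_of_disjoint h_le hindep hd
    have h1 : MeasurableSpace.comap (x N) (inferInstance : MeasurableSpace ℕ)
        ≤ ⨆ q ∈ {q : ℕ × ℕ | q.1 ≤ N},
            MeasurableSpace.comap (y q.1 q.2) (inferInstance : MeasurableSpace ℕ) := by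
      rw [← measurable_iff_comap_le]
      refine chain_measurable y x hx0 hxrec _ (fun i k' hik => ?_) N le_rfl
      rw [measurable_iff_comap_le]
      exact le_iSup₂ (f := fun (q : ℕ × ℕ) (_ : q ∈ {q : ℕ × ℕ | q.1 ≤ N}) =>
        MeasurableSpace.comap (y q.1 q.2) (inferInstance : MeasurableSpace ℕ)) (i, k') hik
    have h2 : MeasurableSpace.comap (y (N+1) k) (inferInstance : MeasurableSpace ℕ)
        ≤ ⨆ q ∈ {q : ℕ × ℕ | q = (N+1, k)},
            MeasurableSpace.comap (y q.1 q.2) (inferInstance : MeasurableSpace ℕ) :=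
      le_iSup₂ (f := fun (q : ℕ × ℕ) (_ : q ∈ {q : ℕ × ℕ | q = (N+1, k)}) =>
        MeasurableSpace.comap (y q.1 q.2) (inferInstance : MeasurableSpace ℕ)) (N+1, k) rfl
    exact indep_of_indep_of_le_left (indep_of_indep_of_le_right h h2) h1
  -- product formula for point events
  have hprod : ∀ N k c c', μ ({ω | x N ω = c} ∩ {ω | y (N+1) k ω = c'})
      = μ {ω | x N ω = c} * μ {ω | y (N+1) k ω = c'} := by
    intro N k c c'
    have h := (hIndepXY N k).measure_inter_preimage_eq_mul {c} {c'}
      (measurableSet_singleton c) (measurableSet_singleton c')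
    simpa [Set.preimage, Set.mem_singleton_iff] using h
  -- Bernoulli complement
  have hy0 : ∀ n k, 1 ≤ k → k ≤ n → (μ {ω | y n k ω = 0}).toReal = 1 - p n k := by
    intro n k h1 h2
    have hsplit : {ω | y n k ω = 0} ∪ {ω | y n k ω = 1} = Set.univ := by
      ext ω
      simp only [Set.mem_union, Set.mem_setOf_eq, Set.mem_univ, iff_true]
      have := hy01 n k ω
      omega
    have hdisj : Disjoint {ω | y n k ω = 0} {ω | y n k ω = 1} := by
      rw [Set.disjoint_left]
      intro ω h0 h1'
      simp only [Set.mem_setOf_eq] at h0 h1'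
      omega
    have hmeas1 : MeasurableSet {ω | y n k ω = 1} := hymeas n k (measurableSet_singleton 1)
    have hsum : μ {ω | y n k ω = 0} + μ {ω | y n k ω = 1} = 1 := by
      rw [← measure_union hdisj hmeas1, hsplit, measure_univ]
    have hp' := hp n k h1 h2
    have h0t : (μ {ω | y n k ω = 0}).toReal + (μ {ω | y n k ω = 1}).toReal = 1 := by
      rw [← ENNReal.toReal_add (measure_ne_top _ _) (measure_ne_top _ _), hsum,
        ENNReal.toReal_one]
    rw [hbern n k h1 h2, ENNReal.toReal_ofReal hp'.1] at h0t
    linarith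
  -- key identity : a n k = P (x n < k)
  have haP : ∀ n k, k ≤ n + 1 → a n k = (μ {ω | x n ω < k}).toReal := by
    intro n
    induction n with
    | zero =>
      intro k hk
      interval_cases k
      · have h0 : {ω | x 0 ω < 0} = ∅ := by ext ω; simp
        rw [ha0, h0]; simp
      · have hU : {ω | x 0 ω < 1} = Set.univ := by
          ext ω; simp [hx0 ω]
        rw [hU, measure_univ, ENNReal.toReal_one]
        exact ha1 0
    | succ j ih =>
      intro k hk
      rcases Nat.eq_zero_or_pos k with rfl | hk1
      · have h0 : {ω | x (j+1) ω < 0} = ∅ := by ext ω; simp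
        rw [ha0, h0]; simp
      rcases eq_or_lt_of_le hk with rfl | hklt
      · have hU : {ω | x (j+1) ω < j + 1 + 1} = Set.univ := by
          ext ω
          simp only [Set.mem_setOf_eq, Set.mem_univ, iff_true]
          have := hxle (j+1) ω
          omega
        rw [hU, measure_univ, ENNReal.toReal_one]
        exact ha1 (j+1)
      · have hkj : k ≤ j + 1 := by omega
        have hrec := harec (j+1) k (by omega) hk1 hkj
        simp only [Nat.add_sub_cancel] at hrec
        have hA := ih (k-1) (by omega)
        have hB := ih k (by omega)
        have hidx : ∀ ω, x j ω = k - 1 → y (j+1) (x j ω + 1) ω = y (j+1) k ω := by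
          intro ω h
          rw [h]
          congr 1
          omega
        have hset : {ω | x (j+1) ω < k}
            = {ω | x j ω < k - 1} ∪ ({ω | x j ω = k - 1} ∩ {ω | y (j+1) k ω = 0}) := by
          ext ω
          have hr := hxrec (j+1) (by omega) ω
          simp only [Nat.add_sub_cancel] at hr
          have hyb := hy01 (j+1) (x j ω + 1) ω
          have hyb2 := hy01 (j+1) k ω
          simp only [Set.mem_setOf_eq, Set.mem_union, Set.mem_inter_iff]
          rw [hr]
          rcases Nat.lt_trichotomy (x j ω) (k-1) with hc | hc | hc
          · omega
          · rw [hidx ω hc]; omega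
          · omega
        have hsplit2 : {ω | x j ω < k} = {ω | x j ω < k - 1} ∪ {ω | x j ω = k - 1} := by
          ext ω
          simp only [Set.mem_setOf_eq, Set.mem_union]
          omega
        have hdisjAB : Disjoint {ω | x j ω < k - 1} {ω | x j ω = k - 1} := by
          rw [Set.disjoint_left]
          intro ω hA' hB'
          simp only [Set.mem_setOf_eq] at hA' hB'
          omega
        have hmB : MeasurableSet {ω | x j ω = k - 1} := hxmeas j (measurableSet_singleton (k-1))
        have hmC : MeasurableSet {ω | y (j+1) k ω = 0} := hymeas (j+1) k (measurableSet_singleton 0)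
        have hμ1 : μ {ω | x (j+1) ω < k}
            = μ {ω | x j ω < k - 1} + μ ({ω | x j ω = k - 1} ∩ {ω | y (j+1) k ω = 0}) := by
          rw [hset, measure_union (hdisjAB.mono_right Set.inter_subset_left) (hmB.inter hmC)]
        have hμ2 : μ {ω | x j ω < k} = μ {ω | x j ω < k - 1} + μ {ω | x j ω = k - 1} := by
          rw [hsplit2, measure_union hdisjAB hmB]
        have hμBC := hprod j k (k-1) 0
        have e1 : (μ {ω | x (j+1) ω < k}).toReal
            = (μ {ω | x j ω < k - 1}).toReal
              + (μ {ω | x j ω = k - 1}).toReal * (μ {ω | y (j+1) k ω = 0}).toReal := by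
          rw [hμ1, ENNReal.toReal_add (measure_ne_top _ _) (measure_ne_top _ _), hμBC,
            ENNReal.toReal_mul]
        have e2 : (μ {ω | x j ω < k}).toReal
            = (μ {ω | x j ω < k - 1}).toReal + (μ {ω | x j ω = k - 1}).toReal := by
          rw [hμ2, ENNReal.toReal_add (measure_ne_top _ _) (measure_ne_top _ _)]
        have e3 : (μ {ω | y (j+1) k ω = 0}).toReal = 1 - p (j+1) k := hy0 (j+1) k hk1 (by omega)
        rw [hrec, hA, hB, e1, e2, e3]
        ring
  -- the normalized CDF-type function
  set F : ℕ → ℝ → ℝ := fun n t => (μ {ω | (x n ω : ℝ) ≤ m n + t * σ n}).toReal with hF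
  have hcltF : ∀ t, Tendsto (fun n => F n t) atTop (𝓝 (stdGaussianCDF t)) := by
    intro t
    refine (hCLT t).congr fun n => ?_
    simp only [hF]
    have hs : {ω | ((x n ω : ℝ) - m n) / σ n ≤ t} = {ω | (x n ω : ℝ) ≤ m n + t * σ n} := by
      ext ω
      simp only [Set.mem_setOf_eq]
      rw [div_le_iff₀ (hσpos n)]
      constructor <;> intro <;> linarith
    rw [hs]
  have hmono : ∀ n (s t : ℝ), s ≤ t → F n s ≤ F n t := by
    intro n s t hst
    simp only [hF]
    refine ENNReal.toReal_mono (measure_ne_top _ _) (measure_mono fun ω hω => ?_)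
    simp only [Set.mem_setOf_eq] at *
    have : s * σ n ≤ t * σ n := mul_le_mul_of_nonneg_right hst (hσpos n).le
    linarith
  have haF : ∀ n k, 1 ≤ k → k ≤ n + 1 → a n k = F n (((k:ℝ) - 1 - m n) / σ n) := by
    intro n k h1 h2
    rw [haP n k h2]
    simp only [hF]
    congr 1
    have hσn := (hσpos n).ne'
    have harith : m n + ((k:ℝ) - 1 - m n) / σ n * σ n = (k:ℝ) - 1 := by
      field_simp
      ring
    rw [harith]
    congr 1
    ext ω
    simp only [Set.mem_setOf_eq]
    constructor
    · intro h
      have h' : x n ω + 1 ≤ k := h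
      have : ((x n ω : ℝ) + 1) ≤ (k:ℝ) := by exact_mod_cast h'
      linarith
    · intro h
      have : ((x n ω : ℝ) + 1) ≤ (k:ℝ) := by linarith
      have h' : x n ω + 1 ≤ k := by exact_mod_cast this
      omega
  have hlow : ∀ (n : ℕ) (t : ℝ), m n + t * σ n < 0 → F n t = 0 := by
    intro n t ht
    simp only [hF]
    have hempty : {ω | (x n ω : ℝ) ≤ m n + t * σ n} = ∅ := by
      ext ω
      simp only [Set.mem_setOf_eq, Set.mem_empty_iff_false, iff_false, not_le]
      have : (0:ℝ) ≤ (x n ω : ℝ) := Nat.cast_nonneg _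
      linarith
    rw [hempty, measure_empty]
    simp
  have hhigh : ∀ (n : ℕ) (t : ℝ), (n:ℝ) ≤ m n + t * σ n → F n t = 1 := by
    intro n t ht
    simp only [hF]
    have huniv : {ω | (x n ω : ℝ) ≤ m n + t * σ n} = Set.univ := by
      ext ω
      simp only [Set.mem_setOf_eq, Set.mem_univ, iff_true]
      have h1 : ((x n ω : ℕ) : ℝ) ≤ (n:ℝ) := Nat.cast_le.mpr (hxle n ω)
      linarith
    rw [huniv, measure_univ]
    simp
  -- main argument
  intro u v hu huv hv1
  have hv : 0 < v := lt_of_lt_of_le hu huv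
  have hu1 : u < 1 := lt_of_le_of_lt huv hv1
  set Qu := stdGaussianQuantile u with hQudef
  set Qv := stdGaussianQuantile v with hQvdef
  have hQu : stdGaussianCDF Qu = u := stdGaussianCDF_quantile hu hu1
  have hQv : stdGaussianCDF Qv = v := stdGaussianCDF_quantile hv hv1
  have hQuv : Qu ≤ Qv := by
    by_contra hc
    push_neg at hc
    have := stdGaussianCDF_strictMono hc
    rw [hQu, hQv] at this
    linarith
  set D := Qv - Qu with hD
  have hD0 : 0 ≤ D := by simp [hD]; linarith
  refine Metric.tendsto_nhds.mpr fun ε hε => ?_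
  set δ := ε / 8 with hδ
  have hδpos : 0 < δ := by positivity
  set t1 := Qu - δ with ht1
  set t2 := Qu + δ with ht2
  set t3 := Qv - δ with ht3
  set t4 := Qv + δ with ht4
  have hΦ1 : stdGaussianCDF t1 < u := by
    rw [← hQu]; exact stdGaussianCDF_strictMono (by simp [ht1]; linarith)
  have hΦ2 : u < stdGaussianCDF t2 := by
    rw [← hQu]; exact stdGaussianCDF_strictMono (by simp [ht2]; linarith)
  have hΦ3 : stdGaussianCDF t3 < v := by
    rw [← hQv]; exact stdGaussianCDF_strictMono (by simp [ht3]; linarith)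
  have hΦ4 : v < stdGaussianCDF t4 := by
    rw [← hQv]; exact stdGaussianCDF_strictMono (by simp [ht4]; linarith)
  have E1 := (hcltF t1).eventually (eventually_lt_nhds hΦ1)
  have E2 := (hcltF t2).eventually (eventually_gt_nhds hΦ2)
  have E3 := (hcltF t3).eventually (eventually_lt_nhds hΦ3)
  have E4 := (hcltF t4).eventually (eventually_gt_nhds hΦ4)
  have E5 := (hcltF t1).eventually (eventually_gt_nhds (stdGaussianCDF_pos t1))
  have E6 := (hcltF t4).eventually (eventually_lt_nhds (stdGaussianCDF_lt_one t4))
  have E7 := hσ.eventually_ge_atTop (8 / ε)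
  filter_upwards [E1, E2, E3, E4, E5, E6, E7] with n h1 h2 h3 h4 h5 h6 h7
  have hσn := hσpos n
  have hδσ : 1 ≤ δ * σ n := by
    have hh := mul_le_mul_of_nonneg_left h7 hδpos.le
    have : δ * (8 / ε) = 1 := by rw [hδ]; field_simp
    linarith
  -- position bounds from support
  have hA0 : 0 ≤ m n + t1 * σ n := by
    by_contra hc
    push_neg at hc
    rw [hlow n t1 hc] at h5
    exact lt_irrefl 0 h5
  have hBn : m n + t4 * σ n < (n:ℝ) := by
    by_contra hc
    push_neg at hc
    rw [hhigh n t4 hc] at h6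
    exact lt_irrefl 1 h6
  set Alo := m n + t1 * σ n + 1 with hAlo
  set Bhi := m n + t4 * σ n + 1 with hBhi
  set A2 := m n + t2 * σ n + 1 with hA2
  set B2 := m n + t3 * σ n + 1 with hB2
  have eUB : Bhi - Alo = (D + 2*δ) * σ n := by
    simp only [hBhi, hAlo, ht4, ht1, hD]; ring
  have eLB : B2 - A2 = (D - 2*δ) * σ n := by
    simp only [hB2, hA2, ht3, ht2, hD]; ring
  have eA2 : A2 - Alo = 2 * (δ * σ n) := by
    simp only [hA2, hAlo, ht2, ht1]; ring
  have eB2 : Bhi - B2 = 2 * (δ * σ n) := by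
    simp only [hBhi, hB2, ht4, ht3]; ring
  have hAlo1 : 1 ≤ Alo := by simp only [hAlo]; linarith
  have hA21 : 1 ≤ A2 := by linarith
  have hB2n : B2 + 1 ≤ (n:ℝ) := by
    simp only [hB2]
    simp only [hBhi] at eB2
    linarith
  have hAloBhi : Alo ≤ Bhi := by
    have : 0 ≤ (D + 2*δ) * σ n := mul_nonneg (by linarith) hσn.le
    linarith
  -- rewrite the sum as a cardinality
  rw [Real.dist_eq]
  have hScard : (∑ k ∈ Finset.Icc 1 n, if u ≤ a n k ∧ a n k ≤ v then (1 : ℝ) else 0)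
      = (((Finset.Icc 1 n).filter (fun k => u ≤ a n k ∧ a n k ≤ v)).card : ℝ) :=
    Finset.sum_boole _ _
  rw [hScard]
  set s := (Finset.Icc 1 n).filter (fun k => u ≤ a n k ∧ a n k ≤ v) with hsdef
  -- upper bound
  have hmemB : ∀ k ∈ s, Alo < (k:ℝ) ∧ (k:ℝ) < Bhi := by
    intro k hk
    rw [hsdef, Finset.mem_filter, Finset.mem_Icc] at hk
    obtain ⟨⟨hk1, hkn⟩, hau, hav⟩ := hk
    have hak := haF n k hk1 (by omega)
    constructor
    · by_contra hc
      push_neg at hc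
      have ht : ((k:ℝ) - 1 - m n) / σ n ≤ t1 := by
        rw [div_le_iff₀ hσn]
        simp only [hAlo] at hc
        linarith
      have := hmono n _ _ ht
      rw [← hak] at this
      linarith
    · by_contra hc
      push_neg at hc
      have ht : t4 ≤ ((k:ℝ) - 1 - m n) / σ n := by
        rw [le_div_iff₀ hσn]
        simp only [hBhi] at hc
        linarith
      have := hmono n _ _ ht
      rw [← hak] at this
      linarith
  have hUB : (s.card : ℝ) ≤ (D + 2*δ) * σ n + 1 := by
    have hsub2 : s ⊆ Finset.Icc ⌈Alo⌉₊ ⌊Bhi⌋₊ := by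
      intro k hk
      rw [Finset.mem_Icc]
      obtain ⟨hA', hB'⟩ := hmemB k hk
      exact ⟨Nat.ceil_le.mpr hA'.le, Nat.le_floor hB'.le⟩
    have hcc := Finset.card_le_card hsub2
    rw [Nat.card_Icc] at hcc
    by_cases hab : ⌈Alo⌉₊ ≤ ⌊Bhi⌋₊ + 1
    · have hc2 : (s.card : ℝ) ≤ ((⌊Bhi⌋₊ + 1 - ⌈Alo⌉₊ : ℕ) : ℝ) := Nat.cast_le.mpr hcc
      rw [Nat.cast_sub hab] at hc2
      push_cast at hc2
      have hfl : (⌊Bhi⌋₊ : ℝ) ≤ Bhi := Nat.floor_le (by linarith)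
      have hcl : Alo ≤ (⌈Alo⌉₊ : ℝ) := Nat.le_ceil _
      linarith
    · push_neg at hab
      have : ⌊Bhi⌋₊ + 1 - ⌈Alo⌉₊ = 0 := by omega
      rw [this] at hcc
      have hc0 : s.card = 0 := by omega
      rw [hc0]
      simp only [Nat.cast_zero]
      have : 0 ≤ (D + 2*δ) * σ n := mul_nonneg (by linarith) hσn.le
      linarith
  -- lower bound
  have hLB : (D - 2*δ) * σ n - 1 ≤ (s.card : ℝ) := by
    by_cases hDd : D ≤ 2*δ
    · have h0 : (D - 2*δ) * σ n ≤ 0 := mul_nonpos_of_nonpos_of_nonneg (by linarith) hσn.le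
      have : (0:ℝ) ≤ s.card := Nat.cast_nonneg _
      linarith
    · push_neg at hDd
      have hA2B2 : A2 ≤ B2 := by
        have : 0 ≤ (D - 2*δ) * σ n := mul_nonneg (by linarith) hσn.le
        linarith
      have hsub3 : Finset.Icc ⌈A2⌉₊ ⌊B2⌋₊ ⊆ s := by
        intro k hk
        rw [Finset.mem_Icc] at hk
        have hkA : A2 ≤ (k:ℝ) := le_trans (Nat.le_ceil A2) (Nat.cast_le.mpr hk.1)
        have hkB : (k:ℝ) ≤ B2 := le_trans (Nat.cast_le.mpr hk.2) (Nat.floor_le (by linarith))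
        have hk1 : 1 ≤ k := by
          have : (1:ℝ) ≤ (k:ℝ) := by linarith
          exact_mod_cast this
        have hkn : k ≤ n := by
          have : (k:ℝ) ≤ (n:ℝ) := by linarith
          exact_mod_cast this
        have hak := haF n k hk1 (by omega)
        have hge : t2 ≤ ((k:ℝ) - 1 - m n) / σ n := by
          rw [le_div_iff₀ hσn]
          simp only [hA2] at hkA
          linarith
        have hle : ((k:ℝ) - 1 - m n) / σ n ≤ t3 := by
          rw [div_le_iff₀ hσn]
          simp only [hB2] at hkB
          linarith
        have hg2 := hmono n _ _ hge
        have hg3 := hmono n _ _ hle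
        rw [← hak] at hg2 hg3
        rw [hsdef, Finset.mem_filter, Finset.mem_Icc]
        exact ⟨⟨hk1, hkn⟩, by linarith, by linarith⟩
      have hcc := Finset.card_le_card hsub3
      have hcard2 : ⌊B2⌋₊ + 1 ≤ (Finset.Icc ⌈A2⌉₊ ⌊B2⌋₊).card + ⌈A2⌉₊ := by
        rw [Nat.card_Icc]
        exact le_tsub_add
      have hcardR : ((⌊B2⌋₊ : ℝ) + 1) ≤ ((Finset.Icc ⌈A2⌉₊ ⌊B2⌋₊).card : ℝ) + (⌈A2⌉₊ : ℝ) := by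
        exact_mod_cast hcard2
      have hf1 : B2 < (⌊B2⌋₊ : ℝ) + 1 := Nat.lt_floor_add_one B2
      have hf2 : (⌈A2⌉₊ : ℝ) < A2 + 1 := Nat.ceil_lt_add_one (by linarith)
      have hccR : ((Finset.Icc ⌈A2⌉₊ ⌊B2⌋₊).card : ℝ) ≤ (s.card : ℝ) := Nat.cast_le.mpr hcc
      linarith
  -- conclude
  have hub2 : (s.card : ℝ) / σ n ≤ D + 2*δ + ε/8 := by
    rw [div_le_iff₀ hσn]
    have h8 : 1 ≤ ε/8 * σ n := by rw [hδ] at hδσ; linarith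
    calc (s.card : ℝ) ≤ (D + 2*δ) * σ n + 1 := hUB
      _ ≤ (D + 2*δ) * σ n + ε/8 * σ n := by linarith
      _ = (D + 2*δ + ε/8) * σ n := by ring
  have hlb2 : D - (2*δ + ε/8) ≤ (s.card : ℝ) / σ n := by
    rw [le_div_iff₀ hσn]
    have h8 : 1 ≤ ε/8 * σ n := by rw [hδ] at hδσ; linarith
    calc (D - (2*δ + ε/8)) * σ n = (D - 2*δ) * σ n - ε/8 * σ n := by ring
      _ ≤ (D - 2*δ) * σ n - 1 := by linarith
      _ ≤ (s.card : ℝ) := hLB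
  rw [abs_lt]
  rw [hδ] at hlb2 hub2
  constructor
  · linarith
  · linarith
end

section
/- Under the Berry–Esseen-type assumption sup_t |P((x_n−m_n)/σ_n ≤ t) − Φ(t)| ≤ C/σ_n with σ_n → ∞, the length ℓ_n of the longest interval of the partition 𝒫_n satisfies ℓ_n = O(1/σ_n); that is, max_{0≤i≤n}(a_{n,i+1} − a_{n,i}) ≤ C'/σ_n for some constant C' and all n. -/
open MeasureTheory ProbabilityTheory Filter Topology

namespace MeshBE

open Real

def chain (y : ℕ → ℕ → ℕ) : ℕ → ℕ
  | 0 => 0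
  | n + 1 => chain y n + y (n + 1) (chain y n + 1)

lemma chain_le {y : ℕ → ℕ → ℕ} (h : ∀ j l, y j l ≤ 1) : ∀ n, chain y n ≤ n
  | 0 => le_refl 0
  | n + 1 => by
    have := chain_le h n
    have := h (n + 1) (chain y n + 1)
    simp only [chain]; omega

lemma measurable_chain (n : ℕ) : Measurable fun y : ℕ → ℕ → ℕ => chain y n := by
  induction n with
  | zero => simpa [chain] using measurable_const
  | succ n ih =>
    have he : Measurable fun q : (ℕ → ℕ → ℕ) × (ℕ × ℕ) => q.1 q.2.1 q.2.2 := by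
      apply measurable_from_prod_countable_left
      intro jl
      exact (measurable_pi_apply jl.2).comp (measurable_pi_apply jl.1)
    have : Measurable fun y : ℕ → ℕ → ℕ => y (n + 1) (chain y n + 1) :=
      he.comp (measurable_id.prodMk (measurable_const.prodMk (ih.add measurable_const)))
    exact ih.add this

lemma chain_congr {y y' : ℕ → ℕ → ℕ} (hy : ∀ j l, y j l ≤ 1) {N : ℕ}
    (h : ∀ j l, j ≤ N → l ≤ N → y j l = y' j l) : ∀ n, n ≤ N → chain y n = chain y' n := by
  intro n
  induction n with
  | zero => intro _; rfl
  | succ n ih =>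
    intro hn
    have h1 : chain y n ≤ n := chain_le hy n
    have h2 := ih (by omega)
    simp only [chain, h2]
    rw [← h2, h (n + 1) (chain y n + 1) (by omega) (by omega), h2]

lemma stdGaussianCDF_lipschitz {s t : ℝ} (h : s ≤ t) :
    stdGaussianCDF t - stdGaussianCDF s ≤ t - s := by
  have hpdf : ∀ x : ℝ, gaussianPDF 0 1 x ≤ 1 := by
    intro x
    show ENNReal.ofReal (gaussianPDFReal 0 1 x) ≤ 1
    refine ENNReal.ofReal_le_one.mpr ?_
    unfold gaussianPDFReal
    have h1 : (1 : ℝ) ≤ Real.sqrt (2 * π * (1 : NNReal)) := by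
      rw [show ((1 : NNReal) : ℝ) = 1 by simp]
      refine Real.one_le_sqrt.mpr ?_
      nlinarith [Real.pi_gt_three]
    have h2 : rexp (-(x - 0) ^ 2 / (2 * (1 : NNReal))) ≤ 1 := by
      refine Real.exp_le_one_iff.mpr ?_
      rw [show ((1 : NNReal) : ℝ) = 1 by simp]
      have : (0:ℝ) ≤ (x - 0)^2 := sq_nonneg _
      nlinarith
    have h3 : (Real.sqrt (2 * π * (1 : NNReal)))⁻¹ ≤ 1 := by
      rw [inv_le_one_iff₀]; right; exact h1
    have h4 : (0:ℝ) ≤ rexp (-(x - 0) ^ 2 / (2 * (1 : NNReal))) := (Real.exp_pos _).le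
    nlinarith
  have hmeas : gaussianReal 0 1 (Set.Ioc s t) ≤ ENNReal.ofReal (t - s) := by
    rw [gaussianReal_apply 0 one_ne_zero]
    calc ∫⁻ x in Set.Ioc s t, gaussianPDF 0 1 x
        ≤ ∫⁻ _ in Set.Ioc s t, 1 := lintegral_mono fun x => hpdf x
      _ = volume (Set.Ioc s t) := setLIntegral_one _
      _ = ENNReal.ofReal (t - s) := Real.volume_Ioc
  have hunion : stdGaussianCDF t = stdGaussianCDF s + (gaussianReal 0 1 (Set.Ioc s t)).toReal := by
    unfold stdGaussianCDF
    rw [← ENNReal.toReal_add (measure_ne_top _ _) (measure_ne_top _ _),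
      ← measure_union (Set.Iic_disjoint_Ioc le_rfl) measurableSet_Ioc,
      Set.Iic_union_Ioc_eq_Iic h]
  have h5 := ENNReal.toReal_mono ENNReal.ofReal_ne_top hmeas
  rw [ENNReal.toReal_ofReal (by linarith)] at h5
  linarith [hunion]

end MeshBE

/-- Under a Berry–Esseen-type bound `sup_t |P((x_n-m_n)/σ_n ≤ t) - Φ(t)| ≤ C/σ_n` with
`σ_n → ∞`, the mesh of the partition satisfies `ℓ_n = O(1/σ_n)`. -/
theorem mesh_big_O_of_berry_esseen
    {Ω : Type*} [MeasurableSpace Ω] (μ : Measure Ω) [IsProbabilityMeasure μ]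
    (p : ℕ → ℕ → ℝ) (hp : ∀ n k, 1 ≤ k → k ≤ n → p n k ∈ Set.Icc (0 : ℝ) 1)
    (a : ℕ → ℕ → ℝ)
    (ha0 : ∀ n, a n 0 = 0) (ha1 : ∀ n, a n (n + 1) = 1)
    (harec : ∀ n k, 1 ≤ n → 1 ≤ k → k ≤ n →
      a n k = p n k * a (n - 1) (k - 1) + (1 - p n k) * a (n - 1) k)
    (y : ℕ → ℕ → Ω → ℕ)
    (hy01 : ∀ n k ω, y n k ω ≤ 1)
    (hymeas : ∀ n k, Measurable (y n k))
    (hindep : iIndepFun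
      (fun nk : ℕ × ℕ => y nk.1 nk.2) μ)
    (hbern : ∀ n k, 1 ≤ k → k ≤ n → μ {ω | y n k ω = 1} = ENNReal.ofReal (p n k))
    (x : ℕ → Ω → ℕ)
    (hx0 : ∀ ω, x 0 ω = 0)
    (hxrec : ∀ n, 1 ≤ n → ∀ ω, x n ω = x (n - 1) ω + y n (x (n - 1) ω + 1) ω)
    (m : ℕ → ℝ) (σ : ℕ → ℝ) (hσpos : ∀ n, 0 < σ n)
    (hσ : Tendsto σ atTop atTop)
    (C : ℝ)
    (hBE : ∀ n : ℕ, ∀ t : ℝ,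
      |(μ {ω | ((x n ω : ℝ) - m n) / σ n ≤ t}).toReal - stdGaussianCDF t| ≤ C / σ n) :
    ∃ C' : ℝ, ∀ n : ℕ, ∀ i ≤ n, a n (i + 1) - a n i ≤ C' / σ n := by
  classical
  set Y : Ω → ℕ → ℕ → ℕ := fun ω j l => y j l ω with hYdef
  have hYmeas : Measurable Y :=
    measurable_pi_lambda _ fun j => measurable_pi_lambda _ fun l => hymeas j l
  have hxchain : ∀ n ω, x n ω = MeshBE.chain (Y ω) n := by
    intro n
    induction n with
    | zero => intro ω; simp [hx0, MeshBE.chain]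
    | succ n ih =>
      intro ω
      have := hxrec (n + 1) (by omega) ω
      simp only [Nat.add_sub_cancel] at this
      rw [this, MeshBE.chain, ← ih ω]
  have hxmeas : ∀ n, Measurable (x n) := by
    intro n
    have : x n = fun ω => MeshBE.chain (Y ω) n := funext fun ω => hxchain n ω
    rw [this]
    exact (MeshBE.measurable_chain n).comp hYmeas
  have hxle : ∀ n ω, x n ω ≤ n := by
    intro n ω
    rw [hxchain]
    exact MeshBE.chain_le (fun j l => hy01 j l ω) n
  set b : ℕ → ℕ → ℝ := fun n k => (μ {ω | x n ω < k}).toReal with hbdef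
  have hb0 : ∀ n, b n 0 = 0 := by
    intro n; simp [hbdef]
  have hb1 : ∀ n, b n (n + 1) = 1 := by
    intro n
    have h : {ω | x n ω < n + 1} = Set.univ :=
      Set.eq_univ_of_forall fun ω => Nat.lt_succ_of_le (hxle n ω)
    simp only [hbdef, h]; simp
  -- independence of x N and y (N+1) k
  have hindepxy : ∀ N k, ProbabilityTheory.IndepFun (x N) (y (N + 1) k) μ := by
    intro N k
    set S : Finset (ℕ × ℕ) := Finset.range (N + 1) ×ˢ Finset.range (N + 1) with hSdef
    set T : Finset (ℕ × ℕ) := {(N + 1, k)} with hTdef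
    have hST : Disjoint S T := by
      simp only [Finset.disjoint_right, hSdef, hTdef, Finset.mem_singleton,
        Finset.mem_product, Finset.mem_range]
      rintro ⟨u, v⟩ h
      simp only [Finset.mem_singleton, Prod.mk.injEq] at h
      omega
    have hI := hindep.indepFun_finset S T hST (fun i => hymeas i.1 i.2)
    set G : ((i : S) → ℕ) → ℕ :=
      fun v => MeshBE.chain (fun j l => if h : (j, l) ∈ S then v ⟨(j, l), h⟩ else 0) N with hGdef
    set H : ((i : T) → ℕ) → ℕ := fun v => v ⟨(N + 1, k), Finset.mem_singleton_self _⟩ with hHdef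
    have hG : Measurable G := by
      refine (MeshBE.measurable_chain N).comp ?_
      refine measurable_pi_lambda _ fun j => measurable_pi_lambda _ fun l => ?_
      by_cases h : (j, l) ∈ S
      · simpa [h] using measurable_pi_apply (⟨(j, l), h⟩ : S)
      · simpa [h] using measurable_const
    have hH : Measurable H := measurable_pi_apply _
    have hcomp := hI.comp hG hH
    have heq1 : (G ∘ fun ω (i : S) => y i.1.1 i.1.2 ω) = x N := by
      funext ω
      simp only [Function.comp_apply, hGdef]
      rw [hxchain N ω]
      refine (MeshBE.chain_congr (fun j l => hy01 j l ω) ?_ N le_rfl).symm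
      intro j l hj hl
      have hmem : (j, l) ∈ S := by
        simp only [hSdef, Finset.mem_product, Finset.mem_range]; omega
      simp [hmem, hYdef]
    have heq2 : (H ∘ fun ω (i : T) => y i.1.1 i.1.2 ω) = y (N + 1) k := rfl
    rwa [heq1, heq2] at hcomp
  -- Bernoulli complement
  have hy0 : ∀ N k, 1 ≤ k → k ≤ N → μ {ω | y N k ω = 0} = 1 - ENNReal.ofReal (p N k) := by
    intro N k h1 h2
    have hc : {ω | y N k ω = 0} = {ω | y N k ω = 1}ᶜ := by
      ext ω
      have := hy01 N k ω
      simp only [Set.mem_setOf_eq, Set.mem_compl_iff]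
      omega
    have hms : MeasurableSet {ω | y N k ω = 1} := hymeas N k (measurableSet_singleton 1)
    rw [hc, prob_compl_eq_one_sub hms, hbern N k h1 h2]
  -- recursion for b
  have hbrec : ∀ N j, j ≤ N →
      b (N + 1) (j + 1) = p (N + 1) (j + 1) * b N j + (1 - p (N + 1) (j + 1)) * b N (j + 1) := by
    intro N j hj
    have hq := hp (N + 1) (j + 1) (by omega) (by omega)
    have hsplit : {ω | x (N + 1) ω < j + 1} =
        {ω | x N ω < j} ∪ ({ω | x N ω = j} ∩ {ω | y (N + 1) (j + 1) ω = 0}) := by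
      ext ω
      have hx' := hxrec (N + 1) (by omega) ω
      simp only [Nat.add_sub_cancel] at hx'
      have hyb := hy01 (N + 1) (x N ω + 1) ω
      simp only [Set.mem_setOf_eq, Set.mem_union, Set.mem_inter_iff]
      constructor
      · intro h
        rcases lt_trichotomy (x N ω) j with h' | h' | h'
        · exact Or.inl h'
        · right
          refine ⟨h', ?_⟩
          rw [hx', h'] at h
          rw [← h'] at h ⊢
          omega
        · exfalso; rw [hx'] at h; omega
      · intro h
        rw [hx']
        rcases h with h | ⟨h1, h2⟩
        · omega
        · rw [h1, h2]; omega
    have hdisj : Disjoint {ω | x N ω < j}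
        ({ω | x N ω = j} ∩ {ω | y (N + 1) (j + 1) ω = 0}) := by
      rw [Set.disjoint_left]
      rintro ω h1 ⟨h2, _⟩
      simp only [Set.mem_setOf_eq] at h1 h2
      omega
    have hmB : MeasurableSet ({ω | x N ω = j} ∩ {ω | y (N + 1) (j + 1) ω = 0}) :=
      ((hxmeas N) (measurableSet_singleton j)).inter
        ((hymeas (N + 1) (j + 1)) (measurableSet_singleton 0))
    have hmu : μ {ω | x (N + 1) ω < j + 1} =
        μ {ω | x N ω < j} + μ {ω | x N ω = j} * (1 - ENNReal.ofReal (p (N + 1) (j + 1))) := by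
      rw [hsplit, measure_union hdisj hmB]
      congr 1
      have hIF := (hindepxy N (j + 1)).measure_inter_preimage_eq_mul
        (s := ({j} : Set ℕ)) (t := ({0} : Set ℕ))
        (measurableSet_singleton _) (measurableSet_singleton _)
      have hsets : ({ω | x N ω = j} ∩ {ω | y (N + 1) (j + 1) ω = 0})
          = x N ⁻¹' {j} ∩ y (N + 1) (j + 1) ⁻¹' {0} := rfl
      rw [hsets, hIF]
      congr 1
      exact hy0 (N + 1) (j + 1) (by omega) (by omega)
    have hdisj2 : Disjoint {ω | x N ω < j} {ω | x N ω = j} := by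
      rw [Set.disjoint_left]
      intro ω h1 h2
      simp only [Set.mem_setOf_eq] at h1 h2
      omega
    have hm2 : MeasurableSet {ω | x N ω = j} := (hxmeas N) (measurableSet_singleton j)
    have hsum : b N (j + 1) = b N j + (μ {ω | x N ω = j}).toReal := by
      have hu : {ω | x N ω < j + 1} = {ω | x N ω < j} ∪ {ω | x N ω = j} := by
        ext ω; simp only [Set.mem_setOf_eq, Set.mem_union]; omega
      show (μ {ω | x N ω < j + 1}).toReal = _
      rw [hu, measure_union hdisj2 hm2, ENNReal.toReal_add (measure_ne_top _ _) (measure_ne_top _ _)]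
    have h1q : ((1 : ENNReal) - ENNReal.ofReal (p (N + 1) (j + 1))).toReal
        = 1 - p (N + 1) (j + 1) := by
      rw [ENNReal.toReal_sub_of_le (ENNReal.ofReal_le_one.mpr hq.2) ENNReal.one_ne_top,
        ENNReal.toReal_one, ENNReal.toReal_ofReal hq.1]
    have hb' : b (N + 1) (j + 1) = b N j
        + (μ {ω | x N ω = j}).toReal * (1 - p (N + 1) (j + 1)) := by
      show (μ {ω | x (N + 1) ω < j + 1}).toReal = _
      rw [hmu, ENNReal.toReal_add (measure_ne_top _ _)
        (ENNReal.mul_ne_top (measure_ne_top _ _) (by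
          refine ne_top_of_le_ne_top ENNReal.one_ne_top ?_
          exact tsub_le_self)), ENNReal.toReal_mul, h1q]
    rw [hb', hsum]
    ring
  -- a = b
  have hab : ∀ n, ∀ k, k ≤ n + 1 → a n k = b n k := by
    intro n
    induction n with
    | zero =>
      intro k hk
      interval_cases k
      · rw [ha0, hb0]
      · rw [show (1 : ℕ) = 0 + 1 from rfl, ha1 0, hb1 0]
    | succ N ih =>
      intro k hk
      rcases Nat.eq_zero_or_pos k with h0 | h1
      · subst h0; rw [ha0, hb0]
      rcases eq_or_lt_of_le hk with he | hlt
      · subst he; rw [ha1 (N + 1), hb1 (N + 1)]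
      obtain ⟨j, rfl⟩ : ∃ j, k = j + 1 := ⟨k - 1, by omega⟩
      have hj : j ≤ N := by omega
      rw [harec (N + 1) (j + 1) (by omega) (by omega) (by omega)]
      simp only [Nat.add_sub_cancel]
      rw [ih j (by omega), ih (j + 1) (by omega), hbrec N j hj]
  -- final bound
  refine ⟨2 * C + 1, fun n i hi => ?_⟩
  have hσn := hσpos n
  rw [hab n (i + 1) (by omega), hab n i (by omega)]
  set t1 : ℝ := ((i : ℝ) - m n) / σ n with ht1
  set t0 : ℝ := ((i : ℝ) - 1 - m n) / σ n with ht0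
  have hset1 : {ω | x n ω < i + 1} = {ω | ((x n ω : ℝ) - m n) / σ n ≤ t1} := by
    ext ω
    simp only [Set.mem_setOf_eq, ht1]
    rw [div_le_div_iff_of_pos_right hσn, sub_le_sub_iff_right]
    constructor
    · intro h
      exact_mod_cast Nat.lt_succ_iff.mp h
    · intro h
      have h' : x n ω ≤ i := by exact_mod_cast h
      omega
  have hset0 : {ω | x n ω < i} = {ω | ((x n ω : ℝ) - m n) / σ n ≤ t0} := by
    ext ω
    simp only [Set.mem_setOf_eq, ht0]
    rw [show (i : ℝ) - 1 - m n = ((i : ℝ) - 1) - m n from rfl,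
      div_le_div_iff_of_pos_right hσn, sub_le_sub_iff_right]
    constructor
    · intro h
      have h' : ((x n ω : ℝ) + 1) ≤ i := by exact_mod_cast Nat.succ_le_of_lt h
      linarith
    · intro h
      have h' : ((x n ω : ℝ) + 1) ≤ i := by linarith
      have : x n ω + 1 ≤ i := by exact_mod_cast h'
      omega
  have hF1 := hBE n t1
  have hF0 := hBE n t0
  have hts : t1 - t0 = 1 / σ n := by
    rw [ht1, ht0, div_sub_div_same]
    congr 1
    ring
  have ht01 : t0 ≤ t1 := by
    have : (0:ℝ) < 1 / σ n := by positivity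
    linarith
  have hΦ := MeshBE.stdGaussianCDF_lipschitz ht01
  have habs1 := abs_le.mp hF1
  have habs0 := abs_le.mp hF0
  have hgoal : b n (i + 1) - b n i
      = (μ {ω | ((x n ω : ℝ) - m n) / σ n ≤ t1}).toReal
        - (μ {ω | ((x n ω : ℝ) - m n) / σ n ≤ t0}).toReal := by
    show (μ {ω | x n ω < i + 1}).toReal - (μ {ω | x n ω < i}).toReal = _
    rw [hset1, hset0]
  rw [hgoal]
  have hrw : (2 * C + 1) / σ n = C / σ n + C / σ n + 1 / σ n := by ring
  rw [hrw]
  linarith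
end

section
/- Under the assumptions of the previous statement, the function I(α) = α·θ(α) − ∫₀¹ log(1−t+t·e^{θ(α)}) H(dt), defined for α ∈ (0,p̄), is continuous and decreasing on (0,p̄), and I(α) → 0 as α → p̄. -/
open MeasureTheory Filter Topology

lemma rfp_denom_pos {t : ℝ} (ht : t ∈ Set.Icc (0:ℝ) 1) (s : ℝ) :
    0 < 1 - t + t * Real.exp s := by
  obtain ⟨h0, h1⟩ := ht
  rcases lt_or_eq_of_le h1 with h | h
  · have := mul_nonneg h0 (Real.exp_pos s).le
    linarith
  · subst h; simpa using Real.exp_pos s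

lemma rfp_log_bound {t : ℝ} (ht : t ∈ Set.Icc (0:ℝ) 1) (s : ℝ) :
    |Real.log (1 - t + t * Real.exp s)| ≤ |s| := by
  have hd := rfp_denom_pos ht s
  have e1 : Real.exp s ≤ Real.exp |s| := Real.exp_le_exp.2 (le_abs_self s)
  have e2 : (1:ℝ) ≤ Real.exp |s| := by
    simpa using Real.exp_le_exp.2 (abs_nonneg s)
  have e3 : Real.exp (-|s|) ≤ Real.exp s := Real.exp_le_exp.2 (neg_abs_le s)
  have e4 : Real.exp (-|s|) ≤ 1 := by
    simpa using Real.exp_le_exp.2 (neg_nonpos.2 (abs_nonneg s))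
  have h1 : 1 - t + t * Real.exp s ≤ Real.exp |s| := by
    nlinarith [ht.1, ht.2, mul_nonneg (sub_nonneg.2 ht.2) (sub_nonneg.2 e2),
      mul_nonneg ht.1 (sub_nonneg.2 e1)]
  have h2 : Real.exp (-|s|) ≤ 1 - t + t * Real.exp s := by
    nlinarith [mul_nonneg (sub_nonneg.2 ht.2) (sub_nonneg.2 e4),
      mul_nonneg ht.1 (sub_nonneg.2 e3)]
  rw [abs_le]
  constructor
  · have := (Real.le_log_iff_exp_le hd).2 h2
    linarith [this]
  · exact (Real.log_le_iff_le_exp hd).2 h1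

lemma rfp_ratio_mono {t : ℝ} (ht : t ∈ Set.Icc (0:ℝ) 1) {s₁ s₂ : ℝ} (h : s₁ ≤ s₂) :
    t * Real.exp s₁ / (1 - t + t * Real.exp s₁)
      ≤ t * Real.exp s₂ / (1 - t + t * Real.exp s₂) := by
  have d1 := rfp_denom_pos ht s₁
  have d2 := rfp_denom_pos ht s₂
  rw [div_le_div_iff₀ d1 d2]
  have he : Real.exp s₁ ≤ Real.exp s₂ := Real.exp_le_exp.2 h
  nlinarith [mul_nonneg (mul_nonneg ht.1 (sub_nonneg.2 ht.2)) (sub_nonneg.2 he)]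

lemma rfp_ratio_strict {t : ℝ} (ht : t ∈ Set.Ioo (0:ℝ) 1) {s₁ s₂ : ℝ} (h : s₁ < s₂) :
    t * Real.exp s₁ / (1 - t + t * Real.exp s₁)
      < t * Real.exp s₂ / (1 - t + t * Real.exp s₂) := by
  have ht' : t ∈ Set.Icc (0:ℝ) 1 := ⟨ht.1.le, ht.2.le⟩
  have d1 := rfp_denom_pos ht' s₁
  have d2 := rfp_denom_pos ht' s₂
  rw [div_lt_div_iff₀ d1 d2]
  have he : Real.exp s₁ < Real.exp s₂ := Real.exp_lt_exp.2 h
  nlinarith [mul_pos (mul_pos ht.1 (sub_pos.2 ht.2)) (sub_pos.2 he)]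

lemma rfp_ratio_bounds {t : ℝ} (ht : t ∈ Set.Icc (0:ℝ) 1) (s : ℝ) :
    t * Real.exp s / (1 - t + t * Real.exp s) ∈ Set.Icc (0:ℝ) 1 := by
  have d := rfp_denom_pos ht s
  constructor
  · exact div_nonneg (mul_nonneg ht.1 (Real.exp_pos s).le) d.le
  · rw [div_le_one d]; linarith [ht.2]

lemma rfp_hasDerivAt {t : ℝ} (ht : t ∈ Set.Icc (0:ℝ) 1) (s : ℝ) :
    HasDerivAt (fun s => Real.log (1 - t + t * Real.exp s))
      (t * Real.exp s / (1 - t + t * Real.exp s)) s := by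
  have h : HasDerivAt (fun s => 1 - t + t * Real.exp s) (t * Real.exp s) s := by
    simpa using ((Real.hasDerivAt_exp s).const_mul t).const_add (1 - t)
  exact h.log (rfp_denom_pos ht s).ne'

lemma rfp_mvt_mono {f f' : ℝ → ℝ} (hd : ∀ x, HasDerivAt f (f' x) x) (hm : Monotone f')
    (a b : ℝ) : f' a * (b - a) ≤ f b - f a := by
  rcases lt_trichotomy a b with h | h | h
  · obtain ⟨c, hc, hceq⟩ := exists_hasDerivAt_eq_slope f f' h
      (fun x _ => (hd x).continuousAt.continuousWithinAt) (fun x _ => hd x)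
    have hba : (0:ℝ) < b - a := by linarith
    have heq : f b - f a = f' c * (b - a) := by
      rw [hceq]; field_simp
    have hle : f' a ≤ f' c := hm hc.1.le
    nlinarith
  · subst h; simp
  · obtain ⟨c, hc, hceq⟩ := exists_hasDerivAt_eq_slope f f' h
      (fun x _ => (hd x).continuousAt.continuousWithinAt) (fun x _ => hd x)
    have hba : (0:ℝ) < a - b := by linarith
    have heq : f a - f b = f' c * (a - b) := by
      rw [hceq]; field_simp
    have hle : f' c ≤ f' a := hm hc.2.le
    nlinarith

lemma rfp_grad_ineq {t : ℝ} (ht : t ∈ Set.Icc (0:ℝ) 1) (s₁ s₂ : ℝ) :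
    t * Real.exp s₁ / (1 - t + t * Real.exp s₁) * (s₂ - s₁) ≤
      Real.log (1 - t + t * Real.exp s₂) - Real.log (1 - t + t * Real.exp s₁) :=
  rfp_mvt_mono (rfp_hasDerivAt ht) (fun _ _ h => rfp_ratio_mono ht h) s₁ s₂

lemma rfp_key (g φ θ I : ℝ → ℝ) (pbar : ℝ)
    (hgc : Continuous g) (hφm : StrictMono φ)
    (hconv : ∀ s₁ s₂ : ℝ, φ s₁ * (s₂ - s₁) ≤ g s₂ - g s₁)
    (hpos : 0 < pbar) (hφ0 : φ 0 = pbar) (hg0 : g 0 = 0)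
    (hθ : ∀ α ∈ Set.Ioo (0:ℝ) pbar, φ (θ α) = α)
    (hI : ∀ α ∈ Set.Ioo (0:ℝ) pbar, I α = α * θ α - g (θ α)) :
    ContinuousOn I (Set.Ioo 0 pbar) ∧ AntitoneOn I (Set.Ioo 0 pbar) ∧
      Tendsto I (𝓝[<] pbar) (𝓝 0) := by
  have hθneg : ∀ α ∈ Set.Ioo (0:ℝ) pbar, θ α < 0 := fun α hα =>
    hφm.lt_iff_lt.1 (by rw [hθ α hα, hφ0]; exact hα.2)
  have hθca : ∀ α₀ ∈ Set.Ioo (0:ℝ) pbar, ContinuousAt θ α₀ := by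
    intro α₀ hα₀
    rw [Metric.continuousAt_iff]
    intro ε hε
    have hlow : φ (θ α₀ - ε) < α₀ := by
      have := hφm (show θ α₀ - ε < θ α₀ by linarith)
      rwa [hθ α₀ hα₀] at this
    have hhigh : α₀ < φ (θ α₀ + ε) := by
      have := hφm (show θ α₀ < θ α₀ + ε by linarith)
      rwa [hθ α₀ hα₀] at this
    refine ⟨min (α₀ - max (φ (θ α₀ - ε)) 0) (min (φ (θ α₀ + ε)) pbar - α₀), ?_, ?_⟩
    · refine lt_min ?_ ?_
      · have : max (φ (θ α₀ - ε)) 0 < α₀ := max_lt hlow hα₀.1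
        linarith
      · have : α₀ < min (φ (θ α₀ + ε)) pbar := lt_min hhigh hα₀.2
        linarith
    · intro x hx
      rw [Real.dist_eq] at hx ⊢
      have hx' := abs_lt.1 hx
      have hd1 : min (α₀ - max (φ (θ α₀ - ε)) 0) (min (φ (θ α₀ + ε)) pbar - α₀)
          ≤ α₀ - max (φ (θ α₀ - ε)) 0 := min_le_left _ _
      have hd2 : min (α₀ - max (φ (θ α₀ - ε)) 0) (min (φ (θ α₀ + ε)) pbar - α₀)
          ≤ min (φ (θ α₀ + ε)) pbar - α₀ := min_le_right _ _
      have hx1 : max (φ (θ α₀ - ε)) 0 < x := by linarith [hx'.1]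
      have hx2 : x < min (φ (θ α₀ + ε)) pbar := by linarith [hx'.2]
      have hxI : x ∈ Set.Ioo (0:ℝ) pbar :=
        ⟨lt_of_le_of_lt (le_max_right _ _) hx1, lt_of_lt_of_le hx2 (min_le_right _ _)⟩
      have h1 : θ α₀ - ε < θ x := hφm.lt_iff_lt.1
        (by rw [hθ x hxI]; exact lt_of_le_of_lt (le_max_left _ _) hx1)
      have h2 : θ x < θ α₀ + ε := hφm.lt_iff_lt.1
        (by rw [hθ x hxI]; exact lt_of_lt_of_le hx2 (min_le_left _ _))
      rw [abs_lt]; constructor <;> linarith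
  have hθt : Tendsto θ (𝓝[<] pbar) (𝓝 0) := by
    rw [tendsto_order]
    constructor
    · intro c hc
      have h1 : φ c < pbar := by rw [← hφ0]; exact hφm hc
      have h2 : max (φ c) 0 < pbar := max_lt h1 hpos
      filter_upwards [Ioo_mem_nhdsLT_of_mem
        (⟨h2, le_refl pbar⟩ : pbar ∈ Set.Ioc (max (φ c) 0) pbar)] with x hx
      have hxI : x ∈ Set.Ioo (0:ℝ) pbar :=
        ⟨lt_of_le_of_lt (le_max_right _ _) hx.1, hx.2⟩
      exact hφm.lt_iff_lt.1 (by rw [hθ x hxI]; exact lt_of_le_of_lt (le_max_left _ _) hx.1)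
    · intro c hc
      filter_upwards [Ioo_mem_nhdsLT_of_mem
        (⟨hpos, le_refl pbar⟩ : pbar ∈ Set.Ioc 0 pbar)] with x hx
      exact lt_trans (hθneg x hx) hc
  have hmem : Set.Ioo (0:ℝ) pbar ∈ 𝓝[<] pbar :=
    Ioo_mem_nhdsLT_of_mem ⟨hpos, le_refl pbar⟩
  refine ⟨?_, ?_, ?_⟩
  · have hc : ContinuousOn (fun α => α * θ α - g (θ α)) (Set.Ioo (0:ℝ) pbar) := fun α hα =>
      ((continuousAt_id.mul (hθca α hα)).sub
        (hgc.continuousAt.comp (hθca α hα))).continuousWithinAt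
    exact hc.congr fun α hα => hI α hα
  · intro a ha b hb hab
    rw [hI a ha, hI b hb]
    have h1 := hconv (θ a) (θ b)
    rw [hθ a ha] at h1
    have h2 : 0 ≤ (b - a) * (-θ b) :=
      mul_nonneg (by linarith) (by linarith [hθneg b hb])
    nlinarith
  · have htend : Tendsto (fun α => α * θ α - g (θ α)) (𝓝[<] pbar) (𝓝 0) := by
      have h1 : Tendsto (fun α : ℝ => α * θ α) (𝓝[<] pbar) (𝓝 (pbar * 0)) :=
        (tendsto_id.mono_left nhdsWithin_le_nhds).mul hθt
      have h2 : Tendsto (fun α => g (θ α)) (𝓝[<] pbar) (𝓝 (g 0)) :=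
        (hgc.continuousAt.tendsto).comp hθt
      have := h1.sub h2
      simpa [hg0] using this
    exact Filter.Tendsto.congr'
      (by filter_upwards [hmem] with α hα using (hI α hα).symm) htend

/-- The rate function `I(α) = α·θ(α) - ∫ log(1-t+t·e^{θ(α)}) dH(t)` is continuous and
decreasing on `(0,p̄)`, and `I(α) → 0` as `α → p̄`. -/
theorem rate_function_properties
    (H : Measure ℝ) [IsProbabilityMeasure H]
    (hsupp : H (Set.Icc 0 1)ᶜ = 0)
    (h01 : H ({0, 1} : Set ℝ) < 1)
    (pbar : ℝ) (hpbar : pbar = ∫ t, t ∂H)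
    (θ : ℝ → ℝ)
    (hθ : ∀ α ∈ Set.Ioo (0 : ℝ) pbar,
      ∫ t, t * Real.exp (θ α) / (1 - t + t * Real.exp (θ α)) ∂H = α)
    (I : ℝ → ℝ)
    (hI : ∀ α ∈ Set.Ioo (0 : ℝ) pbar,
      I α = α * θ α - ∫ t, Real.log (1 - t + t * Real.exp (θ α)) ∂H) :
    ContinuousOn I (Set.Ioo 0 pbar) ∧
    AntitoneOn I (Set.Ioo 0 pbar) ∧
    Tendsto I (𝓝[<] pbar) (𝓝 0) := by
  have ae_mem : ∀ᵐ t ∂H, t ∈ Set.Icc (0:ℝ) 1 := mem_ae_iff.mpr hsupp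
  have measf : ∀ s : ℝ, AEStronglyMeasurable (fun t => Real.log (1 - t + t * Real.exp s)) H := by
    intro s
    exact (Real.measurable_log.comp
      (by fun_prop : Measurable fun t : ℝ => 1 - t + t * Real.exp s)).aestronglyMeasurable
  have measφ : ∀ s : ℝ, AEStronglyMeasurable
      (fun t : ℝ => t * Real.exp s / (1 - t + t * Real.exp s)) H := by
    intro s
    exact (Measurable.div (by fun_prop) (by fun_prop)).aestronglyMeasurable
  have intf : ∀ s : ℝ, Integrable (fun t => Real.log (1 - t + t * Real.exp s)) H := by
    intro s
    refine (integrable_const |s|).mono' (measf s) ?_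
    filter_upwards [ae_mem] with t ht
    simpa [Real.norm_eq_abs] using rfp_log_bound ht s
  have intφ : ∀ s : ℝ, Integrable (fun t : ℝ => t * Real.exp s / (1 - t + t * Real.exp s)) H := by
    intro s
    refine (integrable_const (1:ℝ)).mono' (measφ s) ?_
    filter_upwards [ae_mem] with t ht
    have hb := rfp_ratio_bounds ht s
    rw [Real.norm_eq_abs, abs_le]
    exact ⟨by linarith [hb.1], hb.2⟩
  have intid : Integrable (fun t : ℝ => t) H := by
    refine (integrable_const (1:ℝ)).mono' aestronglyMeasurable_id ?_
    filter_upwards [ae_mem] with t ht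
    rw [Real.norm_eq_abs, abs_le]
    exact ⟨by linarith [ht.1], ht.2⟩
  have hIcc1 : H (Set.Icc (0:ℝ) 1) = 1 := by
    rw [← prob_compl_eq_zero_iff measurableSet_Icc] at *
    exact hsupp
  have hIoo_pos : 0 < H (Set.Ioo (0:ℝ) 1) := by
    by_contra h
    push_neg at h
    have h0 : H (Set.Ioo (0:ℝ) 1) = 0 := le_antisymm h zero_le
    have hsub : Set.Icc (0:ℝ) 1 ⊆ Set.Ioo (0:ℝ) 1 ∪ {0, 1} := by
      intro x hx
      rcases eq_or_lt_of_le hx.1 with h1 | h1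
      · exact Or.inr (by simp [← h1])
      rcases eq_or_lt_of_le hx.2 with h2 | h2
      · exact Or.inr (by simp [h2])
      · exact Or.inl ⟨h1, h2⟩
    have hle := (measure_mono hsub).trans
      (measure_union_le (μ := H) (Set.Ioo (0:ℝ) 1) {0,1})
    rw [hIcc1, h0, zero_add] at hle
    exact absurd hle (not_le.2 h01)
  have hpbar_pos : 0 < pbar := by
    rw [hpbar]
    refine (integral_pos_iff_support_of_nonneg_ae ?_ intid).2 ?_
    · filter_upwards [ae_mem] with t ht using ht.1
    · refine lt_of_lt_of_le hIoo_pos (measure_mono ?_)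
      intro x hx
      simp only [Function.mem_support]
      exact ne_of_gt hx.1
  -- the two key functions
  set φ : ℝ → ℝ := fun s => ∫ t, t * Real.exp s / (1 - t + t * Real.exp s) ∂H with hφdef
  set g : ℝ → ℝ := fun s => ∫ t, Real.log (1 - t + t * Real.exp s) ∂H with hgdef
  have hφmono : StrictMono φ := by
    intro s₁ s₂ hs
    have hpos : 0 < ∫ t, (t * Real.exp s₂ / (1 - t + t * Real.exp s₂)
        - t * Real.exp s₁ / (1 - t + t * Real.exp s₁)) ∂H := by
      refine (integral_pos_iff_support_of_nonneg_ae ?_ ((intφ s₂).sub (intφ s₁))).2 ?_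
      · filter_upwards [ae_mem] with t ht
        simpa using sub_nonneg.2 (rfp_ratio_mono ht hs.le)
      · refine lt_of_lt_of_le hIoo_pos (measure_mono ?_)
        intro x hx
        simp only [Function.mem_support]
        exact ne_of_gt (sub_pos.2 (rfp_ratio_strict hx hs))
    rw [integral_sub (intφ s₂) (intφ s₁)] at hpos
    have e1 : φ s₁ = ∫ t, t * Real.exp s₁ / (1 - t + t * Real.exp s₁) ∂H := rfl
    have e2 : φ s₂ = ∫ t, t * Real.exp s₂ / (1 - t + t * Real.exp s₂) ∂H := rfl
    rw [e1, e2]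
    linarith
  have hconv : ∀ s₁ s₂ : ℝ, φ s₁ * (s₂ - s₁) ≤ g s₂ - g s₁ := by
    intro s₁ s₂
    have h1 : φ s₁ * (s₂ - s₁)
        = ∫ t, (t * Real.exp s₁ / (1 - t + t * Real.exp s₁)) * (s₂ - s₁) ∂H :=
      (integral_mul_const _ _).symm
    have h2 : g s₂ - g s₁
        = ∫ t, (Real.log (1 - t + t * Real.exp s₂) - Real.log (1 - t + t * Real.exp s₁)) ∂H :=
      (integral_sub (intf s₂) (intf s₁)).symm
    rw [h1, h2]
    refine integral_mono_ae ((intφ s₁).mul_const _) ((intf s₂).sub (intf s₁)) ?_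
    filter_upwards [ae_mem] with t ht using rfp_grad_ineq ht s₁ s₂
  have hφ0 : φ 0 = pbar := by
    have e : (fun t : ℝ => t * Real.exp 0 / (1 - t + t * Real.exp 0)) = fun t : ℝ => t := by
      funext t
      simp
    show (∫ t, t * Real.exp 0 / (1 - t + t * Real.exp 0) ∂H) = pbar
    rw [e, ← hpbar]
  have hg0 : g 0 = 0 := by
    show (∫ t, Real.log (1 - t + t * Real.exp 0) ∂H) = 0
    have e : (fun t : ℝ => Real.log (1 - t + t * Real.exp 0)) = fun _ : ℝ => (0:ℝ) := by
      funext t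
      simp
    rw [e, integral_zero]
  have hgcont : Continuous g := by
    rw [continuous_iff_continuousAt]
    intro s₀
    refine continuousAt_of_dominated (bound := fun _ => |s₀| + 1)
      (Filter.Eventually.of_forall fun s => measf s) ?_ (integrable_const _) ?_
    · filter_upwards [Metric.ball_mem_nhds s₀ one_pos] with s hs
      filter_upwards [ae_mem] with t ht
      rw [Real.norm_eq_abs]
      have hds : |s - s₀| < 1 := by rwa [Metric.mem_ball, Real.dist_eq] at hs
      have habs : |s| ≤ |s₀| + 1 := by
        have := abs_sub_abs_le_abs_sub s s₀
        linarith
      linarith [rfp_log_bound ht s]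
    · filter_upwards [ae_mem] with t ht
      have hc : ContinuousAt (fun s => 1 - t + t * Real.exp s) s₀ := by fun_prop
      exact hc.log (rfp_denom_pos ht s₀).ne'
  exact rfp_key g φ θ I pbar hgcont hφmono hconv hpbar_pos hφ0 hg0
    (fun α hα => hθ α hα) (fun α hα => hI α hα)
end
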